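/- arXiv:1903.09610 — 3 statements merged into one kernel-verified Lean document; each statement's English description precedes it below -/
import Mathlib

section
/- Let Ω ⊂ ℝ^d be open and bounded and let ν be as in the context. If there exists ξ ∈ ℝ^d with ν(ξ) ≠ 0 and Ω ⊂ B_{|ξ|/2}(0), then every u ∈ V_ν(Ω|ℝ^d) satisfies u|_Ω ∈ L²(Ω), i.e. V_ν(Ω|ℝ^d) ⊂ L²(Ω). -/
open MeasureTheory ENNReal Filter Set Metric Topology Bornology

noncomputable section

namespace NonlocalMosco

/-- ℝ^d -/
abbrev Ed (d : ℕ) := EuclideanSpace ℝ (Fin d)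

variable {d : ℕ}

/-- The set `(Ωᶜ × Ωᶜ)ᶜ = (ℝ^d × ℝ^d) ∖ (Ωᶜ × Ωᶜ)`. -/
def crossSet (Ω : Set (Ed d)) : Set (Ed d × Ed d) := (Ωᶜ ×ˢ Ωᶜ)ᶜ

/-- Squared seminorm `[u]²_{V_ν(Ω|ℝ^d)}`. -/
def vSemi (Ω : Set (Ed d)) (ν : Ed d → ℝ) (u : Ed d → ℝ) : ℝ≥0∞ :=
  ∫⁻ p in crossSet Ω, ENNReal.ofReal ((u p.1 - u p.2)^2 * ν (p.1 - p.2))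

/-- Squared seminorm `∬_{Ω×Ω} (u(x)-u(y))² ν(x-y)`. -/
def hSemi (Ω : Set (Ed d)) (ν : Ed d → ℝ) (u : Ed d → ℝ) : ℝ≥0∞ :=
  ∫⁻ p in Ω ×ˢ Ω, ENNReal.ofReal ((u p.1 - u p.2)^2 * ν (p.1 - p.2))

/-- Membership in `V_ν(Ω|ℝ^d)`: measurable with finite seminorm. -/
def MemV (Ω : Set (Ed d)) (ν : Ed d → ℝ) (u : Ed d → ℝ) : Prop :=
  Measurable u ∧ vSemi Ω ν u < ⊤

/-- Squared `L²` norm, as a value in `[0,∞]`. -/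
def l2sq (μ : Measure (Ed d)) (u : Ed d → ℝ) : ℝ≥0∞ :=
  ∫⁻ x, ENNReal.ofReal (u x ^ 2) ∂μ

/-- `‖u‖²_{V_ν(Ω|ℝ^d)} = ‖u‖²_{L²(ℝ^d)} + [u]²`. -/
def vNormSq (Ω : Set (Ed d)) (ν : Ed d → ℝ) (u : Ed d → ℝ) : ℝ≥0∞ :=
  l2sq volume u + vSemi Ω ν u

/-- `|||u|||²_{V_ν(Ω|ℝ^d)} = ‖u‖²_{L²(Ω)} + [u]²`. -/
def vTriNormSq (Ω : Set (Ed d)) (ν : Ed d → ℝ) (u : Ed d → ℝ) : ℝ≥0∞ :=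
  l2sq (volume.restrict Ω) u + vSemi Ω ν u

/-- `‖u‖²_{H_ν(Ω)} = ‖u‖²_{L²(Ω)} + ∬_{Ω×Ω}(u(x)-u(y))²ν(x-y)`. -/
def hNormSq (Ω : Set (Ed d)) (ν : Ed d → ℝ) (u : Ed d → ℝ) : ℝ≥0∞ :=
  l2sq (volume.restrict Ω) u + hSemi Ω ν u

/-- Standing assumptions on the unimodal Lévy density ν: measurable, nonnegative, radial,
`∫ (1 ∧ |h|²) ν(h) dh < ∞`, and almost decreasing. -/
def NuLevy (ν : Ed d → ℝ) : Prop :=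
  Measurable ν ∧ (∀ x, 0 ≤ ν x) ∧ (∀ x y : Ed d, ‖x‖ = ‖y‖ → ν x = ν y) ∧
  (∫⁻ h, ENNReal.ofReal (min 1 (‖h‖^2) * ν h)) < ⊤ ∧
  ∃ c : ℝ, 1 ≤ c ∧ ∀ x y : Ed d, x ≠ 0 → ‖x‖ ≤ ‖y‖ → ν y ≤ c * ν x

/-- Standing assumptions on the family `(ρ_ε)_{0<ε<2}`: measurable, nonnegative, radial,
total integral one, concentrating at the origin, and `|h|⁻²ρ_ε(h)` almost decreasing. -/
def IsApproxIdentityFamily (ρ : ℝ → Ed d → ℝ) : Prop :=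
  (∀ ε ∈ Set.Ioo (0:ℝ) 2, Measurable (ρ ε) ∧ (∀ x, 0 ≤ ρ ε x) ∧
    (∀ x y : Ed d, ‖x‖ = ‖y‖ → ρ ε x = ρ ε y) ∧ (∫ x, ρ ε x) = 1) ∧
  (∀ δ : ℝ, 0 < δ →
    Tendsto (fun ε => ∫ x in {x : Ed d | δ < ‖x‖}, ρ ε x) (𝓝[Set.Ioo (0:ℝ) 2] 0) (𝓝 0)) ∧
  ∃ c : ℝ, 1 ≤ c ∧ ∀ ε ∈ Set.Ioo (0:ℝ) 2, ∀ x y : Ed d, x ≠ 0 → ‖x‖ ≤ ‖y‖ →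
    ρ ε y / ‖y‖^2 ≤ c * (ρ ε x / ‖x‖^2)

/-- `ν^α(h) = |h|⁻² ρ_{2-α}(h)`. -/
def nuA (ρ : ℝ → Ed d → ℝ) (α : ℝ) (h : Ed d) : ℝ := ρ (2 - α) h / ‖h‖^2

/-- The kernels `J^α` are measurable and symmetric. -/
def IsKernelFamily (J : ℝ → Ed d → Ed d → ℝ≥0∞) : Prop :=
  ∀ α ∈ Set.Ioo (0:ℝ) 2, Measurable (Function.uncurry (J α)) ∧ ∀ x y, J α x y = J α y x

/-- Condition (E): comparability with `ν^α` on `{|x-y| ≤ 1}`. -/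
def CondE (ρ : ℝ → Ed d → ℝ) (J : ℝ → Ed d → Ed d → ℝ≥0∞) (Λ : ℝ) : Prop :=
  1 ≤ Λ ∧ ∀ α ∈ Set.Ioo (0:ℝ) 2, ∀ x y : Ed d, x ≠ y → ‖x - y‖ ≤ 1 →
    ENNReal.ofReal (Λ⁻¹ * nuA ρ α (x - y)) ≤ J α x y ∧
    J α x y ≤ ENNReal.ofReal (Λ * nuA ρ α (x - y))

/-- Condition (L): uniform vanishing of long-range interactions as `α → 2⁻`. -/
def CondL (J : ℝ → Ed d → Ed d → ℝ≥0∞) : Prop :=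
  ∀ δ : ℝ, 0 < δ →
    Tendsto (fun α => ⨆ x : Ed d, ∫⁻ h in {h : Ed d | δ < ‖h‖}, J α x (x + h))
      (𝓝[Set.Ioo (0:ℝ) 2] 2) (𝓝 0)

/-- Condition (I): translation invariance. -/
def CondI (J : ℝ → Ed d → Ed d → ℝ≥0∞) : Prop :=
  ∀ α ∈ Set.Ioo (0:ℝ) 2, ∀ x y h : Ed d, x ≠ y → J α (x + h) (y + h) = J α x y

/-- Nonlocal quadratic form with kernel `J` over a set `S ⊆ ℝ^d × ℝ^d`. -/
def formOn (S : Set (Ed d × Ed d)) (J : Ed d → Ed d → ℝ≥0∞) (u : Ed d → ℝ) : ℝ≥0∞ :=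
  ∫⁻ p in S, ENNReal.ofReal ((u p.1 - u p.2)^2) * J p.1 p.2

/-- `E^α_Ω(u,u)`. -/
def formOmega (Ω : Set (Ed d)) (J : Ed d → Ed d → ℝ≥0∞) (u : Ed d → ℝ) : ℝ≥0∞ :=
  formOn (Ω ×ˢ Ω) J u

/-- `E^α(u,u)` over `(Ωᶜ×Ωᶜ)ᶜ`. -/
def formCross (Ω : Set (Ed d)) (J : Ed d → Ed d → ℝ≥0∞) (u : Ed d → ℝ) : ℝ≥0∞ :=
  formOn (crossSet Ω) J u

/-- The limits `a_ij(x) = lim_{α→2⁻} ∫_{B_δ(0)} h_i h_j J^α(x,x+h) dh` exist and equal `A x i j`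
(for some δ > 0). -/
def MatrixLimit (J : ℝ → Ed d → Ed d → ℝ≥0∞) (A : Ed d → Matrix (Fin d) (Fin d) ℝ) : Prop :=
  ∃ δ : ℝ, 0 < δ ∧ ∀ x : Ed d, ∀ i j : Fin d,
    Tendsto (fun α => ∫ h in Metric.ball (0 : Ed d) δ, h i * h j * (J α x (x + h)).toReal)
      (𝓝[Set.Ioo (0:ℝ) 2] 2) (𝓝 (A x i j))

/-- `g` is a weak gradient of `u` on the open set `Ω`. -/
def HasWeakGradientOn (Ω : Set (Ed d)) (u : Ed d → ℝ) (g : Ed d → Ed d) : Prop :=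
  LocallyIntegrableOn u Ω ∧ LocallyIntegrableOn g Ω ∧
  ∀ φ : Ed d → ℝ, ContDiff ℝ (⊤ : ℕ∞) φ → HasCompactSupport φ → tsupport φ ⊆ Ω →
    ∫ x in Ω, u x • gradient φ x = - ∫ x in Ω, φ x • g x

/-- Membership in the Sobolev space `H¹(Ω)`. -/
def MemH1 (Ω : Set (Ed d)) (u : Ed d → ℝ) : Prop :=
  MemLp u 2 (volume.restrict Ω) ∧
  ∃ g : Ed d → Ed d, MemLp g 2 (volume.restrict Ω) ∧ HasWeakGradientOn Ω u g

/-- `∫_Ω |∇u|²`, via the (a.e. unique) weak gradient; `∞` if there is none. -/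
def gradNormSq (Ω : Set (Ed d)) (u : Ed d → ℝ) : ℝ≥0∞ :=
  ⨅ g ∈ {g | HasWeakGradientOn Ω u g}, ∫⁻ x in Ω, ENNReal.ofReal (‖g x‖^2)

/-- Squared `H¹(Ω)` norm. -/
def h1NormSq (Ω : Set (Ed d)) (u : Ed d → ℝ) : ℝ≥0∞ :=
  l2sq (volume.restrict Ω) u + gradNormSq Ω u

/-- `E^A(u,u) = ∫_Ω ⟨A(x)∇u(x),∇u(x)⟩ dx`, via the (a.e. unique) weak gradient. -/
def eaForm (Ω : Set (Ed d)) (A : Ed d → Matrix (Fin d) (Fin d) ℝ) (u : Ed d → ℝ) : ℝ≥0∞ :=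
  ⨅ g ∈ {g | HasWeakGradientOn Ω u g},
    ∫⁻ x in Ω, ENNReal.ofReal (∑ i, ∑ j, A x i j * g x j * g x i)

open Classical in
/-- `extVal P v = v` if `P` holds, and `∞` otherwise. -/
def extVal (P : Prop) (v : ℝ≥0∞) : ℝ≥0∞ := if P then v else ⊤

/-- `H¹`-extension domain. -/
def IsExtensionDomain (D : Set (Ed d)) : Prop :=
  IsOpen D ∧ ∃ C : ℝ, 0 < C ∧ ∀ u : Ed d → ℝ, MemH1 D u →
    ∃ v : Ed d → ℝ, MemH1 Set.univ v ∧ (∀ x ∈ D, v x = u x) ∧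
      h1NormSq Set.univ v ≤ ENNReal.ofReal C * h1NormSq D u

/-- Membership in `H¹₀(Ω)`: in `H¹(Ω)` and approximable in the `H¹(Ω)` norm by
smooth functions compactly supported in `Ω`. -/
def MemH10 (Ω : Set (Ed d)) (u : Ed d → ℝ) : Prop :=
  MemH1 Ω u ∧ ∃ useq : ℕ → Ed d → ℝ,
    (∀ n, ContDiff ℝ (⊤ : ℕ∞) (useq n) ∧ HasCompactSupport (useq n) ∧ tsupport (useq n) ⊆ Ω) ∧
    Tendsto (fun n => h1NormSq Ω (u - useq n)) atTop (𝓝 0)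

/-- Ω has a Lipschitz boundary: near every boundary point, after a rigid motion,
Ω coincides with the region above the graph of a Lipschitz function of the
first `d` coordinates. -/
def LipschitzGraphBoundary (Ω : Set (Ed (d+1))) : Prop :=
  ∀ x₀ ∈ frontier Ω, ∃ r : ℝ, 0 < r ∧
    ∃ T : Ed (d+1) ≃ᵃⁱ[ℝ] Ed (d+1), ∃ γ : Ed d → ℝ, ∃ K : NNReal,
      LipschitzWith K γ ∧
      ∀ x ∈ Metric.ball x₀ r,
        (x ∈ Ω ↔ γ (WithLp.toLp 2 (fun i : Fin d => T x i.castSucc)) < T x (Fin.last d))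

/-- Ω has a continuous boundary. -/
def ContinuousGraphBoundary (Ω : Set (Ed (d+1))) : Prop :=
  ∀ x₀ ∈ frontier Ω, ∃ r : ℝ, 0 < r ∧
    ∃ T : Ed (d+1) ≃ᵃⁱ[ℝ] Ed (d+1), ∃ γ : Ed d → ℝ,
      Continuous γ ∧
      ∀ x ∈ Metric.ball x₀ r,
        (x ∈ Ω ↔ γ (WithLp.toLp 2 (fun i : Fin d => T x i.castSucc)) < T x (Fin.last d))

/-- The shifted function `u^z_ε(ξ) = u(ξ + ετ e_d − εz)`. -/
def shiftFn (u : Ed (d+1) → ℝ) (τ ε : ℝ) (z : Ed (d+1)) (ξ : Ed (d+1)) : ℝ :=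
  u (ξ + ε • (τ • EuclideanSpace.single (Fin.last d) (1:ℝ) - z))

end NonlocalMosco

namespace NonlocalMosco

/-- Proposition 2.2 (a): if `ν(ξ) ≠ 0` and `Ω ⊆ B_{|ξ|/2}(0)`, then
`V_ν(Ω|ℝ^d) ⊆ L²(Ω)`. -/
theorem memV_subset_L2
    {d : ℕ} (Ω : Set (Ed d)) (hΩo : IsOpen Ω) (hΩb : IsBounded Ω)
    (ν : Ed d → ℝ) (hν : NuLevy ν)
    (ξ : Ed d) (hξ : ν ξ ≠ 0) (hΩξ : Ω ⊆ Metric.ball (0 : Ed d) (‖ξ‖ / 2))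
    (u : Ed d → ℝ) (hu : MemV Ω ν u) :
    MemLp u 2 (volume.restrict Ω) := by
  obtain ⟨hum, hufin⟩ := hu
  obtain ⟨hνm, hνnn, hνrad, hνint, c, hc1, hcdec⟩ := hν
  have hνξ : 0 < ν ξ := lt_of_le_of_ne (hνnn ξ) (Ne.symm hξ)
  by_cases hξ0 : ξ = 0
  · -- then Ω ⊆ ball 0 0 = ∅
    have hΩe : Ω = ∅ := by
      apply Set.eq_empty_iff_forall_notMem.2
      intro x hx
      exact absurd (hΩξ hx) (by simp [hξ0])
    rw [hΩe, Measure.restrict_empty]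
    exact ⟨aestronglyMeasurable_zero_measure u, by simp [eLpNorm_measure_zero]⟩
  · have hξn : 0 < ‖ξ‖ := norm_pos_iff.2 hξ0
    set r : ℝ := ‖ξ‖ / 2 with hr
    have hrpos : 0 < r := by positivity
    set A : Set (Ed d) := Metric.closedBall (0 : Ed d) r with hA
    -- the squared-difference integrand
    set F : Ed d × Ed d → ℝ≥0∞ := fun p => ENNReal.ofReal ((u p.1 - u p.2) ^ 2) with hF
    have hFm : Measurable F :=
      (((hum.comp measurable_fst).sub (hum.comp measurable_snd)).pow_const 2).ennreal_ofReal
    -- pointwise bound on Ω ×ˢ A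
    have hpt : ∀ p ∈ Ω ×ˢ A, ENNReal.ofReal (ν ξ) * F p ≤
        ENNReal.ofReal c * ENNReal.ofReal ((u p.1 - u p.2) ^ 2 * ν (p.1 - p.2)) := by
      rintro ⟨x, y⟩ ⟨hx, hy⟩
      simp only [hF]
      rw [← ENNReal.ofReal_mul (le_of_lt hνξ), ← ENNReal.ofReal_mul (le_trans zero_le_one hc1)]
      apply ENNReal.ofReal_le_ofReal
      by_cases hxy : x = y
      · simp [hxy]
      · have hw0 : x - y ≠ 0 := sub_ne_zero.2 hxy
        have hxn : ‖x‖ < r := by simpa [Metric.mem_ball] using hΩξ hx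
        have hyn : ‖y‖ ≤ r := by simpa [hA, Metric.mem_closedBall] using hy
        have hwn : ‖x - y‖ ≤ ‖ξ‖ := by
          calc ‖x - y‖ ≤ ‖x‖ + ‖y‖ := norm_sub_le x y
          _ ≤ r + r := by linarith
          _ = ‖ξ‖ := by rw [hr]; ring
        have := hcdec (x - y) ξ hw0 hwn
        nlinarith [sq_nonneg (u x - u y), hνnn (x - y)]
    -- hence the lintegral of F over Ω ×ˢ A is finite
    have hJfin : (∫⁻ p in Ω ×ˢ A, F p) < ⊤ := by
      have h1 : ENNReal.ofReal (ν ξ) * ∫⁻ p in Ω ×ˢ A, F p ≤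
          ENNReal.ofReal c * vSemi Ω ν u := by
        rw [← lintegral_const_mul _ hFm]
        calc ∫⁻ p in Ω ×ˢ A, ENNReal.ofReal (ν ξ) * F p
            ≤ ∫⁻ p in Ω ×ˢ A, ENNReal.ofReal c *
                ENNReal.ofReal ((u p.1 - u p.2) ^ 2 * ν (p.1 - p.2)) := by
              refine setLIntegral_mono ?_ hpt
              exact (measurable_const.mul
                ((((hum.comp measurable_fst).sub (hum.comp measurable_snd)).pow_const 2).mul
                  (hνm.comp (measurable_fst.sub measurable_snd))).ennreal_ofReal)
          _ ≤ ∫⁻ p in crossSet Ω, ENNReal.ofReal c *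
                ENNReal.ofReal ((u p.1 - u p.2) ^ 2 * ν (p.1 - p.2)) := by
              refine lintegral_mono_set ?_
              rintro ⟨x, y⟩ ⟨hx, _⟩ hmem
              exact (hmem.1 : x ∈ Ωᶜ) hx
          _ = ENNReal.ofReal c * vSemi Ω ν u := by
              rw [vSemi, lintegral_const_mul]
              exact ((((hum.comp measurable_fst).sub (hum.comp measurable_snd)).pow_const 2).mul
                  (hνm.comp (measurable_fst.sub measurable_snd))).ennreal_ofReal
      have h2 : ENNReal.ofReal c * vSemi Ω ν u < ⊤ :=
        ENNReal.mul_lt_top ENNReal.ofReal_lt_top hufin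
      by_contra h
      push_neg at h
      rw [top_le_iff.1 h, ENNReal.mul_top (ENNReal.ofReal_pos.2 hνξ).ne'] at h1
      exact h2.not_ge h1
    -- Tonelli: slice in y
    have hTon : (∫⁻ p in Ω ×ˢ A, F p) =
        ∫⁻ y in A, ∫⁻ x in Ω, F (x, y) := by
      rw [show (volume : Measure (Ed d × Ed d)) = Measure.prod volume volume from
        Measure.volume_eq_prod _ _, ← Measure.prod_restrict,
        lintegral_prod_symm F hFm.aemeasurable]
    have hslice : ∀ᵐ y ∂(volume.restrict A), (∫⁻ x in Ω, F (x, y)) < ⊤ := by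
      refine ae_lt_top ?_ (by rw [← hTon]; exact hJfin.ne)
      exact Measurable.lintegral_prod_left (f := fun x y => F (x, y)) hFm
    have hAne : (volume.restrict A) ≠ 0 := by
      rw [Ne, Measure.restrict_eq_zero]
      exact (Metric.measure_closedBall_pos volume 0 hrpos).ne'
    have : (ae (volume.restrict A)).NeBot := ae_neBot.2 hAne
    obtain ⟨y₀, hy₀⟩ := hslice.exists
    -- conclude
    have hΩfin : volume Ω < ⊤ := hΩb.measure_lt_top
    have hkey : (∫⁻ x in Ω, ENNReal.ofReal (u x ^ 2)) < ⊤ := by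
      have hb : ∀ x, ENNReal.ofReal (u x ^ 2) ≤
          ENNReal.ofReal (2 * (u x - u y₀) ^ 2) + ENNReal.ofReal (2 * u y₀ ^ 2) := by
        intro x
        rw [← ENNReal.ofReal_add (by positivity) (by positivity)]
        exact ENNReal.ofReal_le_ofReal (by nlinarith [sq_nonneg (u x - u y₀ - u y₀)])
      calc (∫⁻ x in Ω, ENNReal.ofReal (u x ^ 2))
          ≤ ∫⁻ x in Ω, (ENNReal.ofReal (2 * (u x - u y₀) ^ 2)
              + ENNReal.ofReal (2 * u y₀ ^ 2)) := lintegral_mono hb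
        _ = (∫⁻ x in Ω, ENNReal.ofReal (2 * (u x - u y₀) ^ 2))
              + ENNReal.ofReal (2 * u y₀ ^ 2) * volume Ω := by
            rw [lintegral_add_right _ measurable_const, setLIntegral_const]
        _ < ⊤ := by
            refine ENNReal.add_lt_top.2 ⟨?_, ENNReal.mul_lt_top ENNReal.ofReal_lt_top hΩfin⟩
            have hm2 : Measurable fun x : Ed d => F (x, y₀) :=
              hFm.comp (measurable_id.prodMk measurable_const)
            have heq : ∀ x : Ed d, ENNReal.ofReal (2 * (u x - u y₀) ^ 2)
                = 2 * F (x, y₀) := by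
              intro x
              rw [hF, ENNReal.ofReal_mul (by norm_num)]
              norm_num
            calc ∫⁻ x in Ω, ENNReal.ofReal (2 * (u x - u y₀) ^ 2)
                = ∫⁻ x in Ω, 2 * F (x, y₀) := lintegral_congr fun x => heq x
              _ = 2 * ∫⁻ x in Ω, F (x, y₀) := lintegral_const_mul 2 hm2
              _ < ⊤ := ENNReal.mul_lt_top ENNReal.ofNat_lt_top hy₀
    rw [memLp_two_iff_integrable_sq hum.aestronglyMeasurable]
    refine ⟨(hum.pow_const 2).aestronglyMeasurable, ?_⟩
    rw [hasFiniteIntegral_iff_ofReal (Filter.Eventually.of_forall fun x => sq_nonneg _)]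
    exact hkey

end NonlocalMosco
end
end

section
/- Let Ω ⊂ ℝ^d be open and bounded and let ν be as in the context with ν > 0 almost everywhere on ℝ^d. Then there exist a radial, almost decreasing measurable function ν̃ : ℝ^d → [0,∞) and a constant C > 0, both depending only on ν, d and Ω, such that: (i) ∫_{ℝ^d} ν̃(h) dh < ∞; (ii) 0 ≤ ν̃(h) ≤ C·(1 ∧ ν(h)) for a.e. h; (iii) every u ∈ V_ν(Ω|ℝ^d) satisfies ∫_{ℝ^d} u²(x) ν̃(x) dx < ∞ (and hence ∫_{ℝ^d} |u(x)| ν̃(x) dx < ∞); (iv) on V_ν(Ω|ℝ^d) the norms |||·|||_{V_ν(Ω|ℝ^d)} and |||·|||*_{V_ν(Ω|ℝ^d)}, where |||u|||*² = ∫_{ℝ^d} u²(x) ν̃(x) dx + [u]²_{V_ν(Ω|ℝ^d)}, are equivalent. -/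
open MeasureTheory ENNReal Filter Set Metric Topology Bornology

noncomputable section

namespace NonlocalMosco

section AuxProof

lemma sq_oR (a b : ℝ) :
    ENNReal.ofReal (a^2) ≤ 2 * ENNReal.ofReal ((a-b)^2) + 2 * ENNReal.ofReal (b^2) := by
  calc ENNReal.ofReal (a^2) ≤ ENNReal.ofReal (2*(a-b)^2 + 2*b^2) :=
        ENNReal.ofReal_le_ofReal (by nlinarith [sq_nonneg (a-2*b)])
    _ = _ := by
        rw [ENNReal.ofReal_add (by positivity) (by positivity), ENNReal.ofReal_mul (by norm_num),
          ENNReal.ofReal_mul (by norm_num)]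
        norm_num

lemma oR_le_inv_mul {δ : ℝ} (t w : ℝ) (hδ : 0 < δ) (ht : 0 ≤ t) (h : δ ≤ w) :
    ENNReal.ofReal t ≤ ENNReal.ofReal δ⁻¹ * ENNReal.ofReal (t * w) := by
  rw [← ENNReal.ofReal_mul (by positivity)]
  apply ENNReal.ofReal_le_ofReal
  rw [inv_mul_eq_div, le_div_iff₀ hδ]; nlinarith

lemma oR_mul_le_c {c : ℝ} (t w v : ℝ) (hc : 0 < c) (ht : 0 ≤ t) (h : w ≤ c * v) :
    ENNReal.ofReal (t * w) ≤ ENNReal.ofReal c * ENNReal.ofReal (t * v) := by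
  rw [← ENNReal.ofReal_mul hc.le]
  exact ENNReal.ofReal_le_ofReal (by nlinarith)

lemma min_one_le_mul {c w t : ℝ} (hc : 1 ≤ c) (ht : 0 ≤ t) (h : w ≤ c * t) :
    min 1 w ≤ c * min 1 t := by
  rcases le_total t 1 with h1 | h1
  · rw [min_eq_right h1]; exact le_trans (min_le_right _ _) h
  · rw [min_eq_left h1, mul_one]; exact le_trans (min_le_left _ _) hc

lemma lint_prod_set {d : ℕ} (f : Ed d × Ed d → ℝ≥0∞) (hf : Measurable f) (s t : Set (Ed d)) :
    ∫⁻ p in s ×ˢ t, f p = ∫⁻ x in s, ∫⁻ y in t, f (x, y) := by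
  rw [MeasureTheory.Measure.volume_eq_prod, ← Measure.prod_restrict,
    lintegral_prod _ hf.aemeasurable]

lemma ae_ne' {d : ℕ} [NullSingletonClass (volume : Measure (Ed d))] (x : Ed d) (s : Set (Ed d)) :
    ∀ᵐ y ∂(volume.restrict s), y ≠ x := by
  apply ae_restrict_of_ae
  have h : {y : Ed d | ¬ y ≠ x} = {x} := by ext; simp
  rw [ae_iff, h]; exact measure_singleton x

end AuxProof

set_option maxHeartbeats 1000000 in
/-- Proposition 2.2 (b): if `ν > 0` a.e., there are a finite, radial,
almost decreasing density `ν̃ ≤ C(1 ∧ ν)` such that `V_ν(Ω|ℝ^d) ⊆ L²(ℝ^d, ν̃) ⊆ L¹(ℝ^d, ν̃)`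
and the norms `|||·|||` and `|||·|||*` are equivalent on `V_ν(Ω|ℝ^d)`. -/
theorem exists_finite_comparable_density
    {d : ℕ} (Ω : Set (Ed d)) (hΩo : IsOpen Ω) (hΩb : IsBounded Ω)
    (ν : Ed d → ℝ) (hν : NuLevy ν) (hνpos : ∀ᵐ x : Ed d, 0 < ν x) :
    ∃ νt : Ed d → ℝ, ∃ C : ℝ, 0 < C ∧
      Measurable νt ∧ (∀ x, 0 ≤ νt x) ∧
      (∀ x y : Ed d, ‖x‖ = ‖y‖ → νt x = νt y) ∧
      (∃ c : ℝ, 1 ≤ c ∧ ∀ x y : Ed d, x ≠ 0 → ‖x‖ ≤ ‖y‖ → νt y ≤ c * νt x) ∧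
      -- (i) ν̃ is a finite measure
      (∫⁻ h, ENNReal.ofReal (νt h)) < ⊤ ∧
      -- (ii) 0 ≤ ν̃ ≤ C (1 ∧ ν) a.e.
      (∀ᵐ h : Ed d, νt h ≤ C * min 1 (ν h)) ∧
      -- (iii) V_ν(Ω|ℝ^d) ⊆ L²(ℝ^d, ν̃) ⊆ L¹(ℝ^d, ν̃)
      (∀ u : Ed d → ℝ, MemV Ω ν u →
        (∫⁻ x, ENNReal.ofReal (u x ^ 2 * νt x)) < ⊤ ∧
        (∫⁻ x, ENNReal.ofReal (|u x| * νt x)) < ⊤) ∧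
      -- (iv) equivalence of `|||·|||` and `|||·|||*` on V_ν(Ω|ℝ^d)
      (∃ c₁ c₂ : ℝ, 0 < c₁ ∧ 0 < c₂ ∧ ∀ u : Ed d → ℝ, MemV Ω ν u →
        vTriNormSq Ω ν u
          ≤ ENNReal.ofReal c₁ * ((∫⁻ x, ENNReal.ofReal (u x ^ 2 * νt x)) + vSemi Ω ν u) ∧
        (∫⁻ x, ENNReal.ofReal (u x ^ 2 * νt x)) + vSemi Ω ν u
          ≤ ENNReal.ofReal c₂ * vTriNormSq Ω ν u) := by
  obtain ⟨hνm, hν0, hνrad, hνint, c, hc1, hνdec⟩ := hν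
  have hcpos : (0:ℝ) < c := lt_of_lt_of_le one_pos hc1
  by_cases hΩe : Ω = ∅
  · subst hΩe
    refine ⟨fun _ => 0, 1, one_pos, measurable_const, fun _ => le_rfl, fun _ _ _ => rfl,
      ⟨1, le_rfl, fun x y _ _ => by simp⟩, by simp, ?_, ?_, ?_⟩
    · exact Filter.Eventually.of_forall fun h => by
        simpa using mul_nonneg zero_le_one (le_min zero_le_one (hν0 h))
    · intro u hu
      constructor <;> simp
    · refine ⟨1, 1, one_pos, one_pos, fun u hu => ?_⟩
      have hcross : crossSet (∅ : Set (Ed d)) = ∅ := by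
        simp [crossSet, Set.univ_prod_univ]
      have hS : vSemi (∅ : Set (Ed d)) ν u = 0 := by
        rw [vSemi, hcross]; simp
      have hT : vTriNormSq (∅ : Set (Ed d)) ν u = 0 := by
        rw [vTriNormSq, l2sq, hS]; simp
      rw [hS, hT]; simp
  have hne : Ω.Nonempty := Set.nonempty_iff_ne_empty.mpr hΩe
  by_cases hd : d = 0
  · subst hd
    haveI ss : Subsingleton (Ed 0) := ⟨fun a b => PiLp.ext fun i => i.elim0⟩
    have hall : ∀ x : Ed 0, x = 0 := fun x => Subsingleton.elim _ _
    obtain ⟨z, hz⟩ := hne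
    have hΩu : Ω = Set.univ := Set.eq_univ_of_forall fun x => by
      rw [Subsingleton.elim x z]; exact hz
    subst hΩu
    have huvol : volume (Set.univ : Set (Ed 0)) < ⊤ := by
      haveI : Finite (Ed 0) := Finite.of_subsingleton
      exact Set.finite_univ.isCompact.measure_lt_top
    have hν00 : 0 < ν 0 := by
      by_contra hcon
      have hset : {x : Ed 0 | ¬ 0 < ν x} = Set.univ :=
        Set.eq_univ_of_forall fun x => by rw [hall x]; exact hcon
      have h0 := hνpos
      rw [ae_iff, hset] at h0
      have hpos : (0:ℝ≥0∞) < volume (Set.univ : Set (Ed 0)) :=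
        isOpen_univ.measure_pos volume ⟨0, trivial⟩
      exact absurd h0 hpos.ne'
    set δ : ℝ := min 1 (ν 0) with hδdef
    have hδ : 0 < δ := lt_min one_pos hν00
    have hδ1 : δ ≤ 1 := min_le_left _ _
    have hδi : (1:ℝ) ≤ δ⁻¹ := by
      nlinarith [mul_inv_cancel₀ hδ.ne', inv_pos.mpr hδ,
        mul_nonneg (sub_nonneg.mpr hδ1) (inv_pos.mpr hδ).le]
    refine ⟨fun x => min 1 (ν x), 1, one_pos, measurable_const.min hνm,
      fun x => le_min zero_le_one (hν0 x),
      fun x y h => by show min 1 (ν x) = min 1 (ν y); rw [hνrad x y h],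
      ⟨1, le_rfl, fun x y hx _ => absurd (Subsingleton.elim x 0) hx⟩, ?_, ?_, ?_, ?_⟩
    · calc (∫⁻ h, ENNReal.ofReal (min 1 (ν h))) ≤ ∫⁻ _, 1 :=
          lintegral_mono fun h => ENNReal.ofReal_le_one.mpr (min_le_left _ _)
        _ = volume Set.univ := lintegral_one
        _ < ⊤ := huvol
    · exact Filter.Eventually.of_forall fun h => by rw [one_mul]
    · intro u hu
      constructor
      · calc (∫⁻ x, ENNReal.ofReal (u x ^ 2 * min 1 (ν x)))
            ≤ ∫⁻ _, ENNReal.ofReal (u 0 ^ 2 * min 1 (ν 0)) :=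
            lintegral_mono fun x => by rw [hall x]
          _ = ENNReal.ofReal (u 0 ^ 2 * min 1 (ν 0)) * volume Set.univ := lintegral_const _
          _ < ⊤ := ENNReal.mul_lt_top ENNReal.ofReal_lt_top huvol
      · calc (∫⁻ x, ENNReal.ofReal (|u x| * min 1 (ν x)))
            ≤ ∫⁻ _, ENNReal.ofReal (|u 0| * min 1 (ν 0)) :=
            lintegral_mono fun x => by rw [hall x]
          _ = ENNReal.ofReal (|u 0| * min 1 (ν 0)) * volume Set.univ := lintegral_const _
          _ < ⊤ := ENNReal.mul_lt_top ENNReal.ofReal_lt_top huvol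
    · refine ⟨δ⁻¹, 1, by positivity, one_pos, fun u hu => ?_⟩
      have hm : Measurable fun x : Ed 0 => ENNReal.ofReal (u x ^ 2) :=
        (hu.1.pow_const 2).ennreal_ofReal
      have hI : (∫⁻ x, ENNReal.ofReal (u x ^ 2 * min 1 (ν x)))
          = (∫⁻ x, ENNReal.ofReal (u x ^ 2)) * ENNReal.ofReal δ := by
        calc (∫⁻ x, ENNReal.ofReal (u x ^ 2 * min 1 (ν x)))
            = ∫⁻ x, ENNReal.ofReal (u x ^ 2) * ENNReal.ofReal δ :=
              lintegral_congr fun x => by rw [hall x, ENNReal.ofReal_mul (sq_nonneg _)]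
          _ = _ := lintegral_mul_const _ hm
      have hTri : vTriNormSq Set.univ ν u
          = (∫⁻ x, ENNReal.ofReal (u x ^ 2)) + vSemi Set.univ ν u := by
        rw [vTriNormSq, l2sq, Measure.restrict_univ]
      have h1 : ENNReal.ofReal δ⁻¹ * ((∫⁻ x, ENNReal.ofReal (u x ^ 2)) * ENNReal.ofReal δ)
          = ∫⁻ x, ENNReal.ofReal (u x ^ 2) := by
        rw [mul_comm (∫⁻ x, ENNReal.ofReal (u x ^ 2)), ← mul_assoc,
          ← ENNReal.ofReal_mul (by positivity), inv_mul_cancel₀ hδ.ne', ENNReal.ofReal_one,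
          one_mul]
      constructor
      · rw [hTri, hI, mul_add, h1]
        exact add_le_add le_rfl
          (le_mul_of_one_le_left (by positivity) (ENNReal.one_le_ofReal.mpr hδi))
      · rw [hTri, hI, ENNReal.ofReal_one, one_mul]
        refine add_le_add ?_ le_rfl
        calc (∫⁻ x, ENNReal.ofReal (u x ^ 2)) * ENNReal.ofReal δ
            ≤ (∫⁻ x, ENNReal.ofReal (u x ^ 2)) * 1 :=
            mul_le_mul_right (ENNReal.ofReal_le_one.mpr hδ1) _
          _ = _ := mul_one _
  -- main case : d ≠ 0, Ω ≠ ∅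
  haveI : Nonempty (Fin d) := ⟨⟨0, Nat.pos_of_ne_zero hd⟩⟩
  haveI : NullSingletonClass (volume : Measure (Ed d)) := by
    haveI : Nontrivial (Ed d) := inferInstance
    infer_instance
  obtain ⟨x₀, hx₀⟩ := hne
  obtain ⟨r, hr, hball⟩ := Metric.isOpen_iff.mp hΩo x₀ hx₀
  obtain ⟨R', hR'⟩ := hΩb.subset_ball (0 : Ed d)
  set R₀ : ℝ := max R' 1 with hR₀def
  have hR₀1 : (1:ℝ) ≤ R₀ := le_max_right _ _
  have hR₀ : (0:ℝ) < R₀ := lt_of_lt_of_le one_pos hR₀1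
  have hΩsub : Ω ⊆ ball (0 : Ed d) R₀ := hR'.trans (ball_subset_ball (le_max_left _ _))
  have hΩnorm : ∀ x ∈ Ω, ‖x‖ < R₀ := fun x hx => by
    have := hΩsub hx; rwa [mem_ball_zero_iff] at this
  obtain ⟨y₀, hy₀norm, hy₀pos⟩ : ∃ y₀ : Ed d, 8 * R₀ ≤ ‖y₀‖ ∧ 0 < ν y₀ := by
    set y₁ : Ed d := (8 * R₀ + 1) • EuclideanSpace.single (Classical.arbitrary (Fin d)) (1:ℝ)
      with hy₁
    have hy₁n : ‖y₁‖ = 8 * R₀ + 1 := by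
      rw [hy₁, norm_smul, EuclideanSpace.norm_single, norm_one, mul_one, Real.norm_eq_abs,
        abs_of_pos (by positivity)]
    have hbad : volume {x : Ed d | ¬ 0 < ν x} = 0 := by
      have := hνpos; rwa [ae_iff] at this
    have hpos : 0 < volume (ball y₁ 1 \ {x : Ed d | ¬ 0 < ν x}) := by
      rw [measure_diff_null hbad]; exact measure_ball_pos _ _ one_pos
    obtain ⟨y₀, hy₀mem⟩ := nonempty_of_measure_ne_zero hpos.ne'
    refine ⟨y₀, ?_, not_not.mp hy₀mem.2⟩
    have hd1 : dist y₀ y₁ < 1 := mem_ball.mp hy₀mem.1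
    have h2 : ‖y₁‖ - ‖y₀‖ ≤ dist y₁ y₀ := by rw [dist_eq_norm]; exact norm_sub_norm_le _ _
    have h3 : dist y₁ y₀ < 1 := by rw [dist_comm]; exact hd1
    linarith [hy₁n ▸ h2]
  set δ : ℝ := min 1 (c⁻¹ * ν y₀) with hδdef
  have hδ : 0 < δ := lt_min one_pos (by positivity)
  have hδ1 : δ ≤ 1 := min_le_left _ _
  have hδν : ∀ z : Ed d, z ≠ 0 → ‖z‖ ≤ 8 * R₀ → δ ≤ ν z := by
    intro z hz h8
    refine le_trans (min_le_right _ _) ?_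
    have h := hνdec z y₀ hz (h8.trans hy₀norm)
    rw [inv_mul_le_iff₀ hcpos]
    linarith
  set νt : Ed d → ℝ := fun y => min 1 (ν ((2:ℝ) • y)) with hνt
  have hνtm : Measurable νt := measurable_const.min (hνm.comp (measurable_const_smul (2:ℝ)))
  have hνt0 : ∀ y, 0 ≤ νt y := fun y => le_min zero_le_one (hν0 _)
  have hνt1 : ∀ y, νt y ≤ 1 := fun y => min_le_left _ _
  have hnorm2 : ∀ y : Ed d, ‖(2:ℝ) • y‖ = 2 * ‖y‖ := fun y => by
    rw [norm_smul, Real.norm_eq_abs, abs_of_pos two_pos]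
  have hνtrad : ∀ x y : Ed d, ‖x‖ = ‖y‖ → νt x = νt y := fun x y h => by
    simp only [hνt]
    rw [hνrad ((2:ℝ) • x) ((2:ℝ) • y) (by rw [hnorm2, hnorm2, h])]
  have hνtdec : ∀ x y : Ed d, x ≠ 0 → ‖x‖ ≤ ‖y‖ → νt y ≤ c * νt x := by
    intro x y hx hxy
    exact min_one_le_mul hc1 (hν0 _)
      (hνdec _ _ (smul_ne_zero two_ne_zero hx) (by rw [hnorm2, hnorm2]; linarith))
  have hcomp : ∀ h : Ed d, νt h ≤ c * min 1 (ν h) := by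
    intro h
    by_cases hh : h = 0
    · subst hh
      simp only [hνt, smul_zero]
      exact le_mul_of_one_le_left (le_min zero_le_one (hν0 0)) hc1
    · exact min_one_le_mul hc1 (hν0 _)
        (hνdec h _ hh (by rw [hnorm2]; nlinarith [norm_nonneg h]))
  have hmin1 : Measurable fun h : Ed d => ENNReal.ofReal (min 1 (‖h‖^2) * ν h) :=
    ((measurable_const.min (measurable_norm.pow_const 2)).mul hνm).ennreal_ofReal
  have hNfin : (∫⁻ h, ENNReal.ofReal (νt h)) < ⊤ := by
    rw [← lintegral_add_compl (fun h => ENNReal.ofReal (νt h))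
      (measurableSet_ball : MeasurableSet (ball (0 : Ed d) 1))]
    apply ENNReal.add_lt_top.mpr
    constructor
    · calc (∫⁻ h in ball (0:Ed d) 1, ENNReal.ofReal (νt h)) ≤ ∫⁻ _ in ball (0:Ed d) 1, 1 :=
          setLIntegral_mono measurable_const fun h _ => ENNReal.ofReal_le_one.mpr (hνt1 h)
        _ = volume (ball (0:Ed d) 1) := by rw [setLIntegral_const, one_mul]
        _ < ⊤ := measure_ball_lt_top
    · have hb : ∀ h ∈ (ball (0:Ed d) 1)ᶜ, ENNReal.ofReal (νt h)
          ≤ ENNReal.ofReal c * ENNReal.ofReal (min 1 (‖h‖^2) * ν h) := by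
        intro h hh
        rw [Set.mem_compl_iff, mem_ball_zero_iff, not_lt] at hh
        have hne' : h ≠ 0 := by
          intro h0; rw [h0, norm_zero] at hh; linarith
        have h1 : min 1 (‖h‖^2) = 1 := min_eq_left (by nlinarith)
        have h2 : νt h ≤ c * ν h := le_trans (min_le_right _ _)
          (hνdec h _ hne' (by rw [hnorm2]; nlinarith [norm_nonneg h]))
        rw [h1, one_mul, ← ENNReal.ofReal_mul hcpos.le]
        exact ENNReal.ofReal_le_ofReal h2
      calc (∫⁻ h in (ball (0:Ed d) 1)ᶜ, ENNReal.ofReal (νt h))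
          ≤ ∫⁻ h in (ball (0:Ed d) 1)ᶜ,
              ENNReal.ofReal c * ENNReal.ofReal (min 1 (‖h‖^2) * ν h) :=
            setLIntegral_mono (hmin1.const_mul _) hb
        _ = ENNReal.ofReal c * ∫⁻ h in (ball (0:Ed d) 1)ᶜ,
              ENNReal.ofReal (min 1 (‖h‖^2) * ν h) := lintegral_const_mul _ hmin1
        _ ≤ ENNReal.ofReal c * ∫⁻ h, ENNReal.ofReal (min 1 (‖h‖^2) * ν h) :=
            mul_le_mul_right (setLIntegral_le_lintegral _ _) _
        _ < ⊤ := ENNReal.mul_lt_top ENNReal.ofReal_lt_top hνint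
  set R₁ : ℝ := 2 * R₀ with hR₁def
  set B : Set (Ed d) := ball x₀ r with hBdef
  set B₁ : Set (Ed d) := ball (0:Ed d) R₁ with hB₁def
  have hP1 : ∀ x ∈ Ω, ∀ y : Ed d, ‖y‖ < R₁ → x ≠ y → δ ≤ ν (x - y) := by
    intro x hx y hy hxy
    refine hδν _ (sub_ne_zero.mpr hxy) ?_
    have h1 := hΩnorm x hx
    calc ‖x - y‖ ≤ ‖x‖ + ‖y‖ := norm_sub_le _ _
      _ ≤ 8 * R₀ := by rw [hR₁def] at hy; linarith
  have hP2 : ∀ y : Ed d, y ≠ 0 → ‖y‖ < R₁ → δ ≤ νt y := by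
    intro y hy0 hy
    refine le_min hδ1 (hδν _ (smul_ne_zero two_ne_zero hy0) ?_)
    rw [hnorm2, hR₁def] at *
    linarith
  have hP3 : ∀ x ∈ B, ∀ y : Ed d, R₁ ≤ ‖y‖ → x ≠ y ∧ νt y ≤ c * ν (x - y) := by
    intro x hx y hy
    have hxn : ‖x‖ < R₀ := hΩnorm x (hball hx)
    have hxy : x ≠ y := by
      intro h; rw [h] at hxn; rw [hR₁def] at hy; linarith
    refine ⟨hxy, le_trans (min_le_right _ _) (hνdec _ _ (sub_ne_zero.mpr hxy) ?_)⟩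
    rw [hnorm2]
    have h5 : R₀ ≤ ‖y‖ := by rw [hR₁def] at hy; linarith
    calc ‖x - y‖ ≤ ‖x‖ + ‖y‖ := norm_sub_le _ _
      _ ≤ 2 * ‖y‖ := by linarith
  have hmB : 0 < volume B := measure_ball_pos _ _ hr
  have hmBfin : volume B < ⊤ := measure_ball_lt_top
  have hm₁ : 0 < volume B₁ := measure_ball_pos _ _ (by rw [hR₁def]; linarith)
  have hm₁fin : volume B₁ < ⊤ := measure_ball_lt_top
  have hmΩfin : volume Ω < ⊤ := hΩb.measure_lt_top
  set δ' : ℝ≥0∞ := ENNReal.ofReal δ⁻¹ with hδ'def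
  have hδ'fin : δ' ≠ ⊤ := ENNReal.ofReal_ne_top
  set K : ℝ≥0∞ := 2 * δ' with hKdef
  have hKfin : K < ⊤ := ENNReal.mul_lt_top (by norm_num) hδ'fin.lt_top
  set N : ℝ≥0∞ := ∫⁻ h, ENNReal.ofReal (νt h) with hNdef
  set EA : ℝ≥0∞ := (volume B₁)⁻¹ * (K ⊔ K * volume Ω) with hEA
  set EB : ℝ≥0∞ := (volume B)⁻¹ * ((2 * volume B₁ + 2 * N) ⊔ (K + 2 * ENNReal.ofReal c))
    with hEB
  have hEAfin : EA ≠ ⊤ := by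
    have h1 : (volume B₁)⁻¹ < ⊤ := ENNReal.inv_lt_top.mpr hm₁
    have h2 : K ⊔ K * volume Ω < ⊤ :=
      sup_lt_iff.mpr ⟨hKfin, ENNReal.mul_lt_top hKfin hmΩfin⟩
    exact (ENNReal.mul_lt_top h1 h2).ne
  have hEBfin : EB ≠ ⊤ := by
    have h1 : (volume B)⁻¹ < ⊤ := ENNReal.inv_lt_top.mpr hmB
    have h2 : (2 * volume B₁ + 2 * N) ⊔ (K + 2 * ENNReal.ofReal c) < ⊤ := by
      refine sup_lt_iff.mpr ⟨?_, ?_⟩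
      · exact ENNReal.add_lt_top.mpr ⟨ENNReal.mul_lt_top (by norm_num) hm₁fin,
          ENNReal.mul_lt_top (by norm_num) hNfin⟩
      · exact ENNReal.add_lt_top.mpr ⟨hKfin,
          ENNReal.mul_lt_top (by norm_num) ENNReal.ofReal_lt_top⟩
    exact (ENNReal.mul_lt_top h1 h2).ne
  -- core estimates for a fixed measurable u
  have core : ∀ u : Ed d → ℝ, Measurable u →
      (∫⁻ x in Ω, ENNReal.ofReal (u x ^ 2))
          ≤ EA * ((∫⁻ x, ENNReal.ofReal (u x ^ 2 * νt x)) + vSemi Ω ν u)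
      ∧ (∫⁻ x, ENNReal.ofReal (u x ^ 2 * νt x))
          ≤ EB * ((∫⁻ x in Ω, ENNReal.ofReal (u x ^ 2)) + vSemi Ω ν u)
      ∧ (vSemi Ω ν u < ⊤ → (∫⁻ x in Ω, ENNReal.ofReal (u x ^ 2)) < ⊤) := by
    intro u hum
    set L : ℝ≥0∞ := ∫⁻ x in Ω, ENNReal.ofReal (u x ^ 2) with hL
    set S : ℝ≥0∞ := vSemi Ω ν u with hSdef
    set I : ℝ≥0∞ := ∫⁻ x, ENNReal.ofReal (u x ^ 2 * νt x) with hI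
    have hGm : Measurable fun p : Ed d × Ed d =>
        ENNReal.ofReal ((u p.1 - u p.2)^2 * ν (p.1 - p.2)) :=
      ((((hum.comp measurable_fst).sub (hum.comp measurable_snd)).pow_const 2).mul
        (hνm.comp (measurable_fst.sub measurable_snd))).ennreal_ofReal
    set G : Ed d × Ed d → ℝ≥0∞ :=
      fun p => ENNReal.ofReal ((u p.1 - u p.2)^2 * ν (p.1 - p.2)) with hG
    have hGxy : ∀ x y : Ed d, G (x, y) = ENNReal.ofReal ((u x - u y)^2 * ν (x - y)) :=
      fun _ _ => rfl
    have hGsym : ∀ p : Ed d × Ed d, G (p.2, p.1) = G p := by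
      intro p
      show ENNReal.ofReal _ = ENNReal.ofReal _
      rw [hνrad (p.2 - p.1) (p.1 - p.2) (norm_sub_rev _ _)]
      ring_nf
    have hSeq : S = ∫⁻ p in crossSet Ω, G p := rfl
    have hsub : ∀ (s t : Set (Ed d)), s ⊆ Ω ∨ t ⊆ Ω → s ×ˢ t ⊆ crossSet Ω := by
      intro s t hst p hp hmem
      rcases hst with h | h
      · exact hmem.1 (h hp.1)
      · exact hmem.2 (h hp.2)
    have hST : ∀ s t : Set (Ed d), s ⊆ Ω ∨ t ⊆ Ω →
        (∫⁻ x in s, ∫⁻ y in t, G (x, y)) ≤ S := by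
      intro s t hst
      rw [← lint_prod_set G hGm s t, hSeq]
      exact lintegral_mono_set (hsub s t hst)
    have hSTswap : ∀ s t : Set (Ed d), t ⊆ Ω ∨ s ⊆ Ω →
        (∫⁻ y in s, ∫⁻ x in t, G (x, y)) ≤ S := by
      intro s t hst
      have h1 : (∫⁻ y in s, ∫⁻ x in t, G (x, y)) = ∫⁻ p in s ×ˢ t, G (p.2, p.1) :=
        (lint_prod_set (fun p => G (p.2, p.1)) (hGm.comp measurable_swap) s t).symm
      rw [h1, lintegral_congr (fun p => hGsym p), hSeq]
      exact lintegral_mono_set (hsub s t hst.symm)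
    have hu2m : Measurable fun x => ENNReal.ofReal (u x ^ 2) :=
      (hum.pow_const 2).ennreal_ofReal
    have hu2νm : Measurable fun x => ENNReal.ofReal (u x ^ 2 * νt x) :=
      ((hum.pow_const 2).mul hνtm).ennreal_ofReal
    have hGright : ∀ x : Ed d, Measurable fun y => G (x, y) :=
      fun x => hGm.comp measurable_prodMk_left
    have hGleft : ∀ y : Ed d, Measurable fun x => G (x, y) :=
      fun y => hGm.comp measurable_prodMk_right
    have hFm : ∀ t : Set (Ed d), Measurable fun x => ∫⁻ y in t, G (x, y) :=
      fun t => Measurable.lintegral_prod_right hGm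
    have hFm' : ∀ t : Set (Ed d), Measurable fun y => ∫⁻ x in t, G (x, y) :=
      fun t => Measurable.lintegral_prod_right (hGm.comp measurable_swap)
    -- Claim A : L ≤ EA * (I + S)
    have stepA : ∀ x ∈ Ω, volume B₁ * ENNReal.ofReal (u x ^ 2)
        ≤ K * (∫⁻ y in B₁, G (x, y)) + K * ∫⁻ y in B₁, ENNReal.ofReal (u y ^ 2 * νt y) := by
      intro x hx
      have h0 : volume B₁ * ENNReal.ofReal (u x ^ 2)
          = ∫⁻ _ in B₁, ENNReal.ofReal (u x ^ 2) := by
        rw [setLIntegral_const, mul_comm]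
      rw [h0]
      have hae : ∀ᵐ y ∂(volume.restrict B₁),
          ENNReal.ofReal (u x ^ 2) ≤ K * G (x, y) + K * ENNReal.ofReal (u y ^ 2 * νt y) := by
        filter_upwards [ae_ne' x B₁, ae_ne' 0 B₁, ae_restrict_mem measurableSet_ball]
          with y hyx hy0 hyB
        have hyn : ‖y‖ < R₁ := mem_ball_zero_iff.mp hyB
        have e1 : ENNReal.ofReal ((u x - u y)^2) ≤ δ' * G (x, y) := by
          rw [hGxy]
          exact oR_le_inv_mul _ _ hδ (sq_nonneg _) (hP1 x hx y hyn (Ne.symm hyx))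
        have e2 : ENNReal.ofReal (u y ^ 2) ≤ δ' * ENNReal.ofReal (u y ^ 2 * νt y) :=
          oR_le_inv_mul _ _ hδ (sq_nonneg _) (hP2 y hy0 hyn)
        calc ENNReal.ofReal (u x ^ 2)
            ≤ 2 * ENNReal.ofReal ((u x - u y)^2) + 2 * ENNReal.ofReal (u y ^ 2) := sq_oR _ _
          _ ≤ 2 * (δ' * G (x, y)) + 2 * (δ' * ENNReal.ofReal (u y ^ 2 * νt y)) :=
              add_le_add (mul_le_mul_right e1 2) (mul_le_mul_right e2 2)
          _ = K * G (x, y) + K * ENNReal.ofReal (u y ^ 2 * νt y) := by rw [hKdef]; ring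
      calc (∫⁻ _ in B₁, ENNReal.ofReal (u x ^ 2))
          ≤ ∫⁻ y in B₁, (K * G (x, y) + K * ENNReal.ofReal (u y ^ 2 * νt y)) :=
            lintegral_mono_ae hae
        _ = K * (∫⁻ y in B₁, G (x, y)) + K * ∫⁻ y in B₁, ENNReal.ofReal (u y ^ 2 * νt y) := by
            rw [lintegral_add_left ((hGright x).const_mul K),
              lintegral_const_mul K (hGright x),
              lintegral_const_mul K hu2νm]
    have claimA : L ≤ EA * (I + S) := by
      have h1 : volume B₁ * L ≤ K * S + K * volume Ω * I := by
        calc volume B₁ * L = ∫⁻ x in Ω, volume B₁ * ENNReal.ofReal (u x ^ 2) :=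
              (lintegral_const_mul _ hu2m).symm
          _ ≤ ∫⁻ x in Ω, (K * (∫⁻ y in B₁, G (x, y))
                + K * ∫⁻ y in B₁, ENNReal.ofReal (u y ^ 2 * νt y)) :=
              setLIntegral_mono (((hFm B₁).const_mul K).add measurable_const) stepA
          _ = K * (∫⁻ x in Ω, ∫⁻ y in B₁, G (x, y))
                + (K * ∫⁻ y in B₁, ENNReal.ofReal (u y ^ 2 * νt y)) * volume Ω := by
              rw [lintegral_add_left ((hFm B₁).const_mul K), lintegral_const_mul K (hFm B₁),
                setLIntegral_const]
          _ ≤ K * S + (K * I) * volume Ω := by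
              refine add_le_add (mul_le_mul_right (hST Ω B₁ (Or.inl subset_rfl)) K) ?_
              exact mul_le_mul_left (mul_le_mul_right (setLIntegral_le_lintegral _ _) K) _
          _ = K * S + K * volume Ω * I := by ring
      have h2 : volume B₁ * L ≤ (K ⊔ K * volume Ω) * (I + S) := by
        calc volume B₁ * L ≤ K * S + K * volume Ω * I := h1
          _ ≤ (K ⊔ K * volume Ω) * S + (K ⊔ K * volume Ω) * I :=
              add_le_add (mul_le_mul_left le_sup_left _) (mul_le_mul_left le_sup_right _)
          _ = (K ⊔ K * volume Ω) * (I + S) := by ring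
      calc L = (volume B₁)⁻¹ * (volume B₁ * L) := by
            rw [← mul_assoc, ENNReal.inv_mul_cancel hm₁.ne' hm₁fin.ne, one_mul]
        _ ≤ (volume B₁)⁻¹ * ((K ⊔ K * volume Ω) * (I + S)) := mul_le_mul_right h2 _
        _ = EA * (I + S) := by rw [hEA]; exact (mul_assoc _ _ _).symm
    -- Claim B : I ≤ EB * (L + S)
    have stepB1 : ∀ y ∈ B₁, volume B * ENNReal.ofReal (u y ^ 2)
        ≤ K * (∫⁻ x in B, G (x, y)) + 2 * L := by
      intro y hy
      have hyn : ‖y‖ < R₁ := mem_ball_zero_iff.mp hy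
      have h0 : volume B * ENNReal.ofReal (u y ^ 2)
          = ∫⁻ _ in B, ENNReal.ofReal (u y ^ 2) := by
        rw [setLIntegral_const, mul_comm]
      rw [h0]
      have hae : ∀ᵐ x ∂(volume.restrict B),
          ENNReal.ofReal (u y ^ 2) ≤ K * G (x, y) + 2 * ENNReal.ofReal (u x ^ 2) := by
        filter_upwards [ae_ne' y B, ae_restrict_mem measurableSet_ball] with x hxy hxB
        have e0 : (u y - u x)^2 = (u x - u y)^2 := by ring
        have e1 : ENNReal.ofReal ((u y - u x)^2) ≤ δ' * G (x, y) := by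
          rw [e0, hGxy]
          exact oR_le_inv_mul _ _ hδ (sq_nonneg _) (hP1 x (hball hxB) y hyn hxy)
        calc ENNReal.ofReal (u y ^ 2)
            ≤ 2 * ENNReal.ofReal ((u y - u x)^2) + 2 * ENNReal.ofReal (u x ^ 2) := sq_oR _ _
          _ ≤ 2 * (δ' * G (x, y)) + 2 * ENNReal.ofReal (u x ^ 2) :=
              add_le_add_left (mul_le_mul_right e1 2) _
          _ = K * G (x, y) + 2 * ENNReal.ofReal (u x ^ 2) := by rw [hKdef]; ring
      calc (∫⁻ _ in B, ENNReal.ofReal (u y ^ 2))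
          ≤ ∫⁻ x in B, (K * G (x, y) + 2 * ENNReal.ofReal (u x ^ 2)) := lintegral_mono_ae hae
        _ = K * (∫⁻ x in B, G (x, y)) + 2 * ∫⁻ x in B, ENNReal.ofReal (u x ^ 2) := by
            rw [lintegral_add_left ((hGleft y).const_mul K),
              lintegral_const_mul K (hGleft y),
              lintegral_const_mul 2 hu2m]
        _ ≤ K * (∫⁻ x in B, G (x, y)) + 2 * L :=
            add_le_add_right (mul_le_mul_right (lintegral_mono_set hball) 2) _
    have hB1' : volume B * (∫⁻ y in B₁, ENNReal.ofReal (u y ^ 2 * νt y))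
        ≤ K * S + 2 * volume B₁ * L := by
      calc volume B * (∫⁻ y in B₁, ENNReal.ofReal (u y ^ 2 * νt y))
          ≤ volume B * (∫⁻ y in B₁, ENNReal.ofReal (u y ^ 2)) := by
            refine mul_le_mul_right (lintegral_mono fun y => ENNReal.ofReal_le_ofReal ?_) _
            exact mul_le_of_le_one_right (sq_nonneg _) (hνt1 y)
        _ = ∫⁻ y in B₁, volume B * ENNReal.ofReal (u y ^ 2) :=
            (lintegral_const_mul _ hu2m).symm
        _ ≤ ∫⁻ y in B₁, (K * (∫⁻ x in B, G (x, y)) + 2 * L) :=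
            setLIntegral_mono (((hFm' B).const_mul K).add measurable_const) stepB1
        _ = K * (∫⁻ y in B₁, ∫⁻ x in B, G (x, y)) + 2 * L * volume B₁ := by
            rw [lintegral_add_left ((hFm' B).const_mul K), lintegral_const_mul K (hFm' B),
              setLIntegral_const]
        _ ≤ K * S + 2 * volume B₁ * L := by
            refine add_le_add (mul_le_mul_right (hSTswap B₁ B (Or.inl hball)) K) (le_of_eq ?_)
            ring
    have stepB2 : ∀ y ∈ B₁ᶜ, volume B * ENNReal.ofReal (u y ^ 2 * νt y)
        ≤ (2 * ENNReal.ofReal c) * (∫⁻ x in B, G (x, y))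
          + 2 * ENNReal.ofReal (νt y) * L := by
      intro y hy
      have hyn : R₁ ≤ ‖y‖ := by
        rw [Set.mem_compl_iff, hB₁def, mem_ball_zero_iff, not_lt] at hy; exact hy
      have h0 : volume B * ENNReal.ofReal (u y ^ 2 * νt y)
          = ∫⁻ _ in B, ENNReal.ofReal (u y ^ 2 * νt y) := by
        rw [setLIntegral_const, mul_comm]
      rw [h0]
      have hpt : ∀ x ∈ B, ENNReal.ofReal (u y ^ 2 * νt y)
          ≤ (2 * ENNReal.ofReal c) * G (x, y)
            + 2 * ENNReal.ofReal (νt y) * ENNReal.ofReal (u x ^ 2) := by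
        intro x hx
        obtain ⟨hxy, hcmp⟩ := hP3 x hx y hyn
        have e1 : u y ^ 2 * νt y ≤ 2*((u x - u y)^2 * νt y) + 2*(u x ^ 2 * νt y) := by
          nlinarith [mul_nonneg (sq_nonneg (u y - 2 * u x)) (hνt0 y)]
        have n1 : 0 ≤ (u x - u y)^2 * νt y := mul_nonneg (sq_nonneg _) (hνt0 y)
        have n2 : 0 ≤ u x ^ 2 * νt y := mul_nonneg (sq_nonneg _) (hνt0 y)
        calc ENNReal.ofReal (u y ^ 2 * νt y)
            ≤ ENNReal.ofReal (2*((u x - u y)^2 * νt y) + 2*(u x ^ 2 * νt y)) :=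
              ENNReal.ofReal_le_ofReal e1
          _ = 2 * ENNReal.ofReal ((u x - u y)^2 * νt y)
              + 2 * ENNReal.ofReal (u x ^ 2 * νt y) := by
              rw [ENNReal.ofReal_add (by linarith) (by linarith),
                ENNReal.ofReal_mul (by norm_num : (0:ℝ) ≤ 2),
                ENNReal.ofReal_mul (by norm_num : (0:ℝ) ≤ 2), ENNReal.ofReal_ofNat]
          _ ≤ 2 * (ENNReal.ofReal c * G (x, y))
              + 2 * (ENNReal.ofReal (νt y) * ENNReal.ofReal (u x ^ 2)) := by
              refine add_le_add (mul_le_mul_right ?_ 2) (mul_le_mul_right (le_of_eq ?_) 2)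
              · rw [hGxy]
                exact oR_mul_le_c _ _ _ hcpos (sq_nonneg _) hcmp
              · rw [mul_comm (u x ^ 2), ENNReal.ofReal_mul (hνt0 y)]
          _ = (2 * ENNReal.ofReal c) * G (x, y)
              + 2 * ENNReal.ofReal (νt y) * ENNReal.ofReal (u x ^ 2) := by ring
      calc (∫⁻ _ in B, ENNReal.ofReal (u y ^ 2 * νt y))
          ≤ ∫⁻ x in B, ((2 * ENNReal.ofReal c) * G (x, y)
              + 2 * ENNReal.ofReal (νt y) * ENNReal.ofReal (u x ^ 2)) :=
            setLIntegral_mono (((hGleft y).const_mul _).add (hu2m.const_mul _)) hpt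
        _ = (2 * ENNReal.ofReal c) * (∫⁻ x in B, G (x, y))
            + 2 * ENNReal.ofReal (νt y) * ∫⁻ x in B, ENNReal.ofReal (u x ^ 2) := by
            rw [lintegral_add_left ((hGleft y).const_mul _), lintegral_const_mul _ (hGleft y),
              lintegral_const_mul _ hu2m]
        _ ≤ (2 * ENNReal.ofReal c) * (∫⁻ x in B, G (x, y))
            + 2 * ENNReal.ofReal (νt y) * L :=
            add_le_add le_rfl (mul_le_mul_right (lintegral_mono_set hball) _)
    have hB2' : volume B * (∫⁻ y in B₁ᶜ, ENNReal.ofReal (u y ^ 2 * νt y))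
        ≤ (2 * ENNReal.ofReal c) * S + 2 * N * L := by
      calc volume B * (∫⁻ y in B₁ᶜ, ENNReal.ofReal (u y ^ 2 * νt y))
          = ∫⁻ y in B₁ᶜ, volume B * ENNReal.ofReal (u y ^ 2 * νt y) :=
            (lintegral_const_mul _ hu2νm).symm
        _ ≤ ∫⁻ y in B₁ᶜ, ((2 * ENNReal.ofReal c) * (∫⁻ x in B, G (x, y))
              + 2 * ENNReal.ofReal (νt y) * L) :=
            setLIntegral_mono (((hFm' B).const_mul _).add
              ((hνtm.ennreal_ofReal.const_mul 2).mul_const L)) stepB2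
        _ = (2 * ENNReal.ofReal c) * (∫⁻ y in B₁ᶜ, ∫⁻ x in B, G (x, y))
            + (2 * L) * ∫⁻ y in B₁ᶜ, ENNReal.ofReal (νt y) := by
            rw [lintegral_add_left ((hFm' B).const_mul _), lintegral_const_mul _ (hFm' B)]
            congr 1
            have hre : ∀ y : Ed d, 2 * ENNReal.ofReal (νt y) * L
                = (2 * L) * ENNReal.ofReal (νt y) := fun y => by ring
            rw [lintegral_congr hre, lintegral_const_mul _ hνtm.ennreal_ofReal]
        _ ≤ (2 * ENNReal.ofReal c) * S + (2 * L) * N :=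
            add_le_add (mul_le_mul_right (hSTswap B₁ᶜ B (Or.inl hball)) _)
              (mul_le_mul_right (setLIntegral_le_lintegral _ _) _)
        _ = (2 * ENNReal.ofReal c) * S + 2 * N * L := by ring
    have claimB : I ≤ EB * (L + S) := by
      have hIsplit : I = (∫⁻ y in B₁, ENNReal.ofReal (u y ^ 2 * νt y))
          + ∫⁻ y in B₁ᶜ, ENNReal.ofReal (u y ^ 2 * νt y) :=
        (lintegral_add_compl _ measurableSet_ball).symm
      have h1 : volume B * I
          ≤ (K + 2 * ENNReal.ofReal c) * S + (2 * volume B₁ + 2 * N) * L := by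
        calc volume B * I
            = volume B * (∫⁻ y in B₁, ENNReal.ofReal (u y ^ 2 * νt y))
              + volume B * ∫⁻ y in B₁ᶜ, ENNReal.ofReal (u y ^ 2 * νt y) := by
              rw [hIsplit, mul_add]
          _ ≤ (K * S + 2 * volume B₁ * L) + ((2 * ENNReal.ofReal c) * S + 2 * N * L) :=
              add_le_add hB1' hB2'
          _ = (K + 2 * ENNReal.ofReal c) * S + (2 * volume B₁ + 2 * N) * L := by ring
      have h2 : volume B * I
          ≤ ((2 * volume B₁ + 2 * N) ⊔ (K + 2 * ENNReal.ofReal c)) * (L + S) := by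
        calc volume B * I
            ≤ (K + 2 * ENNReal.ofReal c) * S + (2 * volume B₁ + 2 * N) * L := h1
          _ ≤ ((2 * volume B₁ + 2 * N) ⊔ (K + 2 * ENNReal.ofReal c)) * S
              + ((2 * volume B₁ + 2 * N) ⊔ (K + 2 * ENNReal.ofReal c)) * L :=
              add_le_add (mul_le_mul_left le_sup_right _) (mul_le_mul_left le_sup_left _)
          _ = _ := by ring
      calc I = (volume B)⁻¹ * (volume B * I) := by
            rw [← mul_assoc, ENNReal.inv_mul_cancel hmB.ne' hmBfin.ne, one_mul]
        _ ≤ (volume B)⁻¹ * (((2 * volume B₁ + 2 * N) ⊔ (K + 2 * ENNReal.ofReal c)) * (L + S)) :=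
            mul_le_mul_right h2 _
        _ = EB * (L + S) := by rw [hEB]; exact (mul_assoc _ _ _).symm
    -- Claim C : S < ⊤ → L < ⊤
    have claimC : S < ⊤ → L < ⊤ := by
      intro hSfin
      by_cases hmΩ : volume Ω = 0
      · have h0 : volume.restrict Ω = 0 := Measure.restrict_eq_zero.mpr hmΩ
        rw [hL, h0, lintegral_zero_measure]
        exact ENNReal.zero_lt_top
      · have hQm : Measurable fun p : Ed d × Ed d => ENNReal.ofReal ((u p.1 - u p.2)^2) :=
          (((hum.comp measurable_fst).sub (hum.comp measurable_snd)).pow_const 2).ennreal_ofReal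
        have hQleft : ∀ y : Ed d, Measurable fun x => ENNReal.ofReal ((u x - u y)^2) :=
          fun y => hQm.comp measurable_prodMk_right
        set F : Ed d → ℝ≥0∞ := fun y => ∫⁻ x in Ω, ENNReal.ofReal ((u x - u y)^2) with hF
        have hFmeas : Measurable F :=
          Measurable.lintegral_prod_right (hQm.comp measurable_swap)
        have hFbound : ∫⁻ y in Ω, F y ≤ δ' * S := by
          have hin : ∀ y ∈ Ω, F y ≤ δ' * ∫⁻ x in Ω, G (x, y) := by
            intro y hy
            rw [hF]
            dsimp only
            rw [← lintegral_const_mul δ' (hGleft y)]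
            apply lintegral_mono_ae
            filter_upwards [ae_ne' y Ω, ae_restrict_mem hΩo.measurableSet] with x hxy hxΩ
            rw [hGxy]
            refine oR_le_inv_mul _ _ hδ (sq_nonneg _) (hP1 x hxΩ y ?_ hxy)
            have := hΩnorm y hy
            rw [hR₁def]; linarith
          calc (∫⁻ y in Ω, F y) ≤ ∫⁻ y in Ω, δ' * ∫⁻ x in Ω, G (x, y) :=
              setLIntegral_mono ((hFm' Ω).const_mul δ') hin
            _ = δ' * ∫⁻ y in Ω, ∫⁻ x in Ω, G (x, y) := lintegral_const_mul δ' (hFm' Ω)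
            _ ≤ δ' * S := mul_le_mul_right (hSTswap Ω Ω (Or.inl subset_rfl)) δ'
        have hFae : ∀ᵐ y ∂(volume.restrict Ω), F y < ⊤ := by
          apply ae_lt_top hFmeas
          exact (lt_of_le_of_lt hFbound (ENNReal.mul_lt_top hδ'fin.lt_top hSfin)).ne
        haveI : Filter.NeBot (ae (volume.restrict Ω)) :=
          ae_neBot.mpr (by rwa [Ne, Measure.restrict_eq_zero])
        obtain ⟨y₂, hy₂⟩ := hFae.exists
        calc L ≤ ∫⁻ x in Ω, (2 * ENNReal.ofReal ((u x - u y₂)^2)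
              + 2 * ENNReal.ofReal (u y₂ ^ 2)) :=
            lintegral_mono fun x => sq_oR _ _
          _ = 2 * F y₂ + 2 * ENNReal.ofReal (u y₂ ^ 2) * volume Ω := by
              rw [lintegral_add_left ((hQleft y₂).const_mul 2),
                lintegral_const_mul 2 (hQleft y₂), setLIntegral_const, mul_assoc]
          _ < ⊤ := by
              apply ENNReal.add_lt_top.mpr
              exact ⟨ENNReal.mul_lt_top (by norm_num) hy₂,
                ENNReal.mul_lt_top (ENNReal.mul_lt_top (by norm_num) ENNReal.ofReal_lt_top)
                  hmΩfin⟩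
    exact ⟨claimA, claimB, claimC⟩
  refine ⟨νt, c, hcpos, hνtm, hνt0, hνtrad, ⟨c, hc1, hνtdec⟩, hNfin,
    Filter.Eventually.of_forall hcomp, ?_, ?_⟩
  · intro u hu
    obtain ⟨hA, hB, hC⟩ := core u hu.1
    have hLfin := hC hu.2
    have hIfin : (∫⁻ x, ENNReal.ofReal (u x ^ 2 * νt x)) < ⊤ :=
      lt_of_le_of_lt hB (ENNReal.mul_lt_top hEBfin.lt_top
        (ENNReal.add_lt_top.mpr ⟨hLfin, hu.2⟩))
    refine ⟨hIfin, ?_⟩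
    have hu2νm : Measurable fun x => ENNReal.ofReal (u x ^ 2 * νt x) :=
      ((hu.1.pow_const 2).mul hνtm).ennreal_ofReal
    calc (∫⁻ x, ENNReal.ofReal (|u x| * νt x))
        ≤ ∫⁻ x, (ENNReal.ofReal (u x ^ 2 * νt x) + ENNReal.ofReal (νt x)) := by
          refine lintegral_mono fun x => ?_
          rw [← ENNReal.ofReal_add (mul_nonneg (sq_nonneg _) (hνt0 x)) (hνt0 x)]
          apply ENNReal.ofReal_le_ofReal
          nlinarith [hνt0 x, sq_abs (u x), mul_nonneg (mul_nonneg (abs_nonneg (u x))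
            (abs_nonneg (u x))) (hνt0 x), mul_nonneg (sq_nonneg (|u x| - 1)) (hνt0 x)]
      _ = (∫⁻ x, ENNReal.ofReal (u x ^ 2 * νt x)) + N := lintegral_add_left hu2νm _
      _ < ⊤ := ENNReal.add_lt_top.mpr ⟨hIfin, hNfin⟩
  · refine ⟨(EA + 1).toReal, (EB + 1).toReal,
      ENNReal.toReal_pos (by simp) (ENNReal.add_ne_top.mpr ⟨hEAfin, ENNReal.one_ne_top⟩),
      ENNReal.toReal_pos (by simp) (ENNReal.add_ne_top.mpr ⟨hEBfin, ENNReal.one_ne_top⟩),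
      fun u hu => ?_⟩
    obtain ⟨hA, hB, -⟩ := core u hu.1
    have hTri : vTriNormSq Ω ν u
        = (∫⁻ x in Ω, ENNReal.ofReal (u x ^ 2)) + vSemi Ω ν u := rfl
    constructor
    · rw [ENNReal.ofReal_toReal (ENNReal.add_ne_top.mpr ⟨hEAfin, ENNReal.one_ne_top⟩), hTri]
      calc (∫⁻ x in Ω, ENNReal.ofReal (u x ^ 2)) + vSemi Ω ν u
          ≤ EA * ((∫⁻ x, ENNReal.ofReal (u x ^ 2 * νt x)) + vSemi Ω ν u)
            + ((∫⁻ x, ENNReal.ofReal (u x ^ 2 * νt x)) + vSemi Ω ν u) :=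
            add_le_add hA le_add_self
        _ = (EA + 1) * ((∫⁻ x, ENNReal.ofReal (u x ^ 2 * νt x)) + vSemi Ω ν u) := by ring
    · rw [ENNReal.ofReal_toReal (ENNReal.add_ne_top.mpr ⟨hEBfin, ENNReal.one_ne_top⟩), hTri]
      calc (∫⁻ x, ENNReal.ofReal (u x ^ 2 * νt x)) + vSemi Ω ν u
          ≤ EB * ((∫⁻ x in Ω, ENNReal.ofReal (u x ^ 2)) + vSemi Ω ν u)
            + ((∫⁻ x in Ω, ENNReal.ofReal (u x ^ 2)) + vSemi Ω ν u) :=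
            add_le_add hB le_add_self
        _ = (EB + 1) * ((∫⁻ x in Ω, ENNReal.ofReal (u x ^ 2)) + vSemi Ω ν u) := by ring

end NonlocalMosco
end
end

section
/- Let Ω ⊂ ℝ^d be open and bounded and let ν, the shift setup, and u be as in the context, with u ∈ V_ν(Ω|ℝ^d) and supp u compactly contained in B_{r/4}(x₀). Then for every δ > 0 there exists η > 0 such that for all measurable sets E ⊂ Ω and F ⊂ ℝ^d with |E×F| < η (product Lebesgue measure), sup_{z∈B₁(0)} sup_{0<ε<r/(2(1+τ))} ∬_{E×F} (u^z_ε(x)−u^z_ε(y))² ν(x−y) dy dx < δ. -/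
open MeasureTheory ENNReal Filter Set Metric Topology Bornology

noncomputable section

namespace NonlocalMosco

variable {d : ℕ}

def prjE (ξ : Ed (d+1)) : Ed d := WithLp.toLp 2 (fun j : Fin d => ξ j.castSucc)

lemma abs_coord_le_norm {n : ℕ} (z : Ed n) (i : Fin n) : |z i| ≤ ‖z‖ := by
  rw [EuclideanSpace.norm_eq, ← Real.sqrt_sq_eq_abs]
  apply Real.sqrt_le_sqrt
  have h := Finset.single_le_sum (f := fun j => ‖z j‖ ^ 2)
    (fun j _ => sq_nonneg _) (Finset.mem_univ i)
  simpa [Real.norm_eq_abs, sq_abs] using h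

lemma prjE_norm_le (z : Ed (d+1)) : ‖prjE z‖ ≤ ‖z‖ := by
  rw [EuclideanSpace.norm_eq, EuclideanSpace.norm_eq]
  apply Real.sqrt_le_sqrt
  rw [Fin.sum_univ_castSucc (f := fun i => ‖z i‖ ^ 2)]
  have h : (0:ℝ) ≤ ‖z (Fin.last d)‖ ^ 2 := sq_nonneg _
  simp only [prjE, PiLp.toLp_apply]
  linarith

section Geom

variable (Ω : Set (Ed (d+1))) (x₀ : Ed (d+1)) (r : ℝ) (k : NNReal) (γ : Ed d → ℝ)

lemma lip_coord (hγ : LipschitzWith k γ) (w x : Ed (d+1)) :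
    |γ (WithLp.toLp 2 (fun i : Fin d => w i.castSucc)) - γ (WithLp.toLp 2 (fun i : Fin d => x i.castSucc))| ≤ (k:ℝ) * ‖prjE (w - x)‖ := by
  have h1 := hγ.dist_le_mul (WithLp.toLp 2 (fun i : Fin d => w i.castSucc) : Ed d) (WithLp.toLp 2 (fun i : Fin d => x i.castSucc) : Ed d)
  rw [Real.dist_eq] at h1
  refine h1.trans ?_
  have h5 : (WithLp.toLp 2 (fun i : Fin d => w i.castSucc) : Ed d) - (WithLp.toLp 2 (fun i : Fin d => x i.castSucc) : Ed d) = prjE (w - x) := rfl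
  rw [dist_eq_norm, h5]

lemma shift_in (hγ : LipschitzWith k γ)
    (hgraph : ∀ x : Ed (d+1), x ∈ Ω ∩ Metric.ball x₀ r ↔
        x ∈ Metric.ball x₀ r ∧ γ (WithLp.toLp 2 (fun i : Fin d => x i.castSucc)) < x (Fin.last d))
    {τ : ℝ} (hτ : 1 + (k : ℝ) < τ)
    {z : Ed (d+1)} (hz : ‖z‖ < 1) {ε : ℝ} (hε : 0 < ε)
    {x : Ed (d+1)} (hx : x ∈ Ω) (hxb : x ∈ Metric.ball x₀ r)
    (hab : x + ε • (τ • EuclideanSpace.single (Fin.last d) (1:ℝ) - z) ∈ Metric.ball x₀ r) :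
    x + ε • (τ • EuclideanSpace.single (Fin.last d) (1:ℝ) - z) ∈ Ω := by
  set a : Ed (d+1) := x + ε • (τ • EuclideanSpace.single (Fin.last d) (1:ℝ) - z) with ha
  have hγx : γ (WithLp.toLp 2 (fun i : Fin d => x i.castSucc)) < x (Fin.last d) := ((hgraph x).1 ⟨hx, hxb⟩).2
  have hk0 : (0:ℝ) ≤ (k:ℝ) := k.2
  have halast : a (Fin.last d) = x (Fin.last d) + ε * (τ - z (Fin.last d)) := by
    simp only [ha, PiLp.add_apply, PiLp.smul_apply, PiLp.sub_apply,
      EuclideanSpace.single_apply, if_pos rfl, smul_eq_mul, if_true]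
    ring
  have hprj : prjE (a - x) = (-ε) • prjE z := by
    ext j
    simp only [ha, prjE, PiLp.sub_apply, PiLp.add_apply, PiLp.smul_apply,
      EuclideanSpace.single_apply, if_neg (Fin.castSucc_lt_last j).ne, smul_eq_mul]
    ring
  have hlip : |γ (WithLp.toLp 2 (fun i : Fin d => a i.castSucc)) - γ (WithLp.toLp 2 (fun i : Fin d => x i.castSucc))| ≤ (k:ℝ) * (ε * ‖prjE z‖) := by
    have h1 := lip_coord k γ hγ a x
    rw [hprj, norm_smul, Real.norm_eq_abs, abs_neg, abs_of_pos hε] at h1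
    exact h1
  have hzl := abs_le.1 (abs_coord_le_norm z (Fin.last d))
  have hz' : ‖prjE z‖ ≤ ‖z‖ := prjE_norm_le z
  have hγa : γ (WithLp.toLp 2 (fun i : Fin d => a i.castSucc)) < a (Fin.last d) := by
    have h3 := (abs_le.1 hlip).2
    rw [halast]
    have t1 : (k:ℝ) * (ε * ‖prjE z‖) ≤ (k:ℝ) * (ε * ‖z‖) := by
      apply mul_le_mul_of_nonneg_left _ hk0
      exact mul_le_mul_of_nonneg_left hz' hε.le
    have t2 : ε * z (Fin.last d) ≤ ε * ‖z‖ := mul_le_mul_of_nonneg_left hzl.2 hε.le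
    have tin : (0:ℝ) < τ - ((k:ℝ)+1) * ‖z‖ := by
      nlinarith [mul_nonneg (by linarith : (0:ℝ) ≤ (k:ℝ)+1)
        (by linarith [norm_nonneg z] : (0:ℝ) ≤ 1 - ‖z‖), norm_nonneg z]
    have t3 : (k:ℝ) * (ε * ‖z‖) + ε * ‖z‖ < ε * τ := by nlinarith [mul_pos hε tin]
    linarith
  exact ((hgraph a).2 ⟨hab, hγa⟩).1

lemma gamma_eq (hΩo : IsOpen Ω) (hx₀ : x₀ ∈ frontier Ω) (hr : 0 < r)
    (hγ : LipschitzWith k γ)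
    (hgraph : ∀ x : Ed (d+1), x ∈ Ω ∩ Metric.ball x₀ r ↔
        x ∈ Metric.ball x₀ r ∧ γ (WithLp.toLp 2 (fun i : Fin d => x i.castSucc)) < x (Fin.last d)) :
    γ (WithLp.toLp 2 (fun i : Fin d => x₀ i.castSucc)) = x₀ (Fin.last d) := by
  have hk0 : (0:ℝ) ≤ (k:ℝ) := k.2
  have hx₀n : x₀ ∉ Ω := fun h => hx₀.2 (by rwa [hΩo.interior_eq])
  have hge : x₀ (Fin.last d) ≤ γ (WithLp.toLp 2 (fun i : Fin d => x₀ i.castSucc)) := by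
    by_contra h
    push_neg at h
    exact hx₀n ((hgraph x₀).2 ⟨Metric.mem_ball_self hr, h⟩).1
  refine le_antisymm ?_ hge
  by_contra h
  push_neg at h
  set d₀ := γ (WithLp.toLp 2 (fun i : Fin d => x₀ i.castSucc)) - x₀ (Fin.last d) with hd₀
  have hd₀0 : 0 < d₀ := by simp only [hd₀]; linarith
  set s := min r (d₀ / (2 * ((k:ℝ) + 1))) with hs
  have hs0 : 0 < s := lt_min hr (by positivity)
  obtain ⟨w, hwb, hwΩ⟩ : (Metric.ball x₀ s ∩ Ω).Nonempty :=
    _root_.mem_closure_iff.1 hx₀.1 _ Metric.isOpen_ball (Metric.mem_ball_self hs0)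
  have hwr : w ∈ Metric.ball x₀ r := Metric.ball_subset_ball (min_le_left _ _) hwb
  have hwg : γ (WithLp.toLp 2 (fun i : Fin d => w i.castSucc)) < w (Fin.last d) := ((hgraph w).1 ⟨hwΩ, hwr⟩).2
  have hn : ‖w - x₀‖ < s := by rwa [Metric.mem_ball, dist_eq_norm] at hwb
  have h2 : |w (Fin.last d) - x₀ (Fin.last d)| ≤ ‖w - x₀‖ := by
    have := abs_coord_le_norm (w - x₀) (Fin.last d)
    simpa [PiLp.sub_apply] using this
  have h3 : |γ (WithLp.toLp 2 (fun i : Fin d => w i.castSucc)) - γ (WithLp.toLp 2 (fun i : Fin d => x₀ i.castSucc))| ≤ (k:ℝ) * ‖w - x₀‖ :=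
    (lip_coord k γ hγ w x₀).trans (mul_le_mul_of_nonneg_left (prjE_norm_le _) hk0)
  have hsle : s ≤ d₀ / (2*((k:ℝ)+1)) := min_le_right _ _
  have h5 : ((k:ℝ)+1) * s ≤ d₀/2 := by
    calc ((k:ℝ)+1) * s ≤ ((k:ℝ)+1) * (d₀ / (2*((k:ℝ)+1))) := by
          apply mul_le_mul_of_nonneg_left hsle (by linarith)
      _ = d₀/2 := by field_simp
  have h2' := abs_le.1 h2
  have h3' := abs_le.1 h3
  have hkn : (k:ℝ) * ‖w - x₀‖ ≤ (k:ℝ) * s := mul_le_mul_of_nonneg_left hn.le hk0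
  nlinarith [hn, norm_nonneg (w - x₀)]

lemma cone_in (hγ : LipschitzWith k γ)
    (hgraph : ∀ x : Ed (d+1), x ∈ Ω ∩ Metric.ball x₀ r ↔
        x ∈ Metric.ball x₀ r ∧ γ (WithLp.toLp 2 (fun i : Fin d => x i.castSucc)) < x (Fin.last d))
    (hgx₀ : γ (WithLp.toLp 2 (fun i : Fin d => x₀ i.castSucc)) = x₀ (Fin.last d))
    {h lam : ℝ} (hlam : 0 < lam) (hh1 : (1 + (k:ℝ)) * lam ≤ h) (hh2 : h + lam < r)
    {q : Ed (d+1)}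
    (hq : q ∈ Metric.ball (x₀ + h • EuclideanSpace.single (Fin.last d) (1:ℝ)) lam) :
    q ∈ Ω := by
  have hk0 : (0:ℝ) ≤ (k:ℝ) := k.2
  have hh0 : 0 ≤ h := le_trans (by positivity) hh1
  set ζ : Ed (d+1) := q - (x₀ + h • EuclideanSpace.single (Fin.last d) (1:ℝ)) with hζ
  have hζn : ‖ζ‖ < lam := by
    rw [Metric.mem_ball, dist_eq_norm] at hq
    exact hq
  have hqb : q ∈ Metric.ball x₀ r := by
    rw [Metric.mem_ball, dist_eq_norm]
    have hqe : q - x₀ = ζ + h • EuclideanSpace.single (Fin.last d) (1:ℝ) := by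
      rw [hζ]; abel
    rw [hqe]
    calc ‖ζ + h • EuclideanSpace.single (Fin.last d) (1:ℝ)‖
        ≤ ‖ζ‖ + ‖h • EuclideanSpace.single (Fin.last d) (1:ℝ)‖ := norm_add_le _ _
      _ = ‖ζ‖ + |h| := by
          rw [norm_smul, EuclideanSpace.norm_single, Real.norm_eq_abs]
          norm_num
      _ < r := by rw [abs_of_nonneg hh0]; linarith
  have hζl := abs_le.1 (abs_coord_le_norm ζ (Fin.last d))
  have hζp : ‖prjE ζ‖ ≤ ‖ζ‖ := prjE_norm_le ζ
  have hqlast : q (Fin.last d) = x₀ (Fin.last d) + h + ζ (Fin.last d) := by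
    have : ζ (Fin.last d) = q (Fin.last d) - x₀ (Fin.last d) - h := by
      simp only [hζ, PiLp.sub_apply, PiLp.add_apply, PiLp.smul_apply,
        EuclideanSpace.single_apply, if_pos rfl, smul_eq_mul, if_true]
      ring
    linarith
  have hprj : prjE (q - x₀) = prjE ζ := by
    ext j
    simp only [hζ, prjE, PiLp.sub_apply, PiLp.add_apply, PiLp.smul_apply,
      EuclideanSpace.single_apply, if_neg (Fin.castSucc_lt_last j).ne, smul_eq_mul]
    ring
  have hγq : |γ (WithLp.toLp 2 (fun i : Fin d => q i.castSucc)) - γ (WithLp.toLp 2 (fun i : Fin d => x₀ i.castSucc))| ≤ (k:ℝ) * ‖prjE ζ‖ := by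
    have := lip_coord k γ hγ q x₀
    rwa [hprj] at this
  have hfin : γ (WithLp.toLp 2 (fun i : Fin d => q i.castSucc)) < q (Fin.last d) := by
    have h1 := (abs_le.1 hγq).2
    have hkζ : (k:ℝ) * ‖prjE ζ‖ ≤ (k:ℝ) * lam :=
      mul_le_mul_of_nonneg_left (le_trans hζp hζn.le) hk0
    rw [hqlast, ← hgx₀]
    linarith [hζl.1, hζn]
  exact ((hgraph q).2 ⟨hqb, hfin⟩).1

end Geom

lemma iter_eq_prod (A B : Set (Ed (d+1)))
    (f : Ed (d+1) × Ed (d+1) → ℝ≥0∞) (hf : Measurable f) :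
    ∫⁻ q in A ×ˢ B, f q = ∫⁻ b in A, ∫⁻ a in B, f (b, a) := by
  have hre : (volume : Measure (Ed (d+1) × Ed (d+1))).restrict (A ×ˢ B)
      = ((volume : Measure (Ed (d+1))).restrict A).prod
        ((volume : Measure (Ed (d+1))).restrict B) := by
    rw [Measure.prod_restrict]; rfl
  rw [hre]
  exact lintegral_prod f hf.aemeasurable

lemma prod_fst_integral (A B : Set (Ed (d+1)))
    (F : Ed (d+1) → ℝ≥0∞) (hF : Measurable F) :
    ∫⁻ q in A ×ˢ B, F q.1 = volume B * ∫⁻ x in A, F x := by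
  rw [iter_eq_prod A B (fun q => F q.1) (hF.comp measurable_fst)]
  show ∫⁻ b in A, ∫⁻ _a in B, F b = _
  calc ∫⁻ b in A, ∫⁻ _a in B, F b = ∫⁻ b in A, volume B * F b := by
        refine lintegral_congr fun b => ?_
        rw [setLIntegral_const, mul_comm]
    _ = volume B * ∫⁻ b in A, F b := lintegral_const_mul _ hF

lemma prod_snd_integral (A B : Set (Ed (d+1)))
    (F : Ed (d+1) → ℝ≥0∞) (hF : Measurable F) :
    ∫⁻ q in A ×ˢ B, F q.2 = volume A * ∫⁻ x in B, F x := by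
  rw [iter_eq_prod A B (fun q => F q.2) (hF.comp measurable_snd)]
  show ∫⁻ _b in A, ∫⁻ a in B, F a = _
  rw [setLIntegral_const, mul_comm]


end NonlocalMosco

namespace NonlocalMosco

set_option maxHeartbeats 2000000 in
/-- Lemma 2.10, uniform equi-integrability: for `u ∈ V_ν(Ω|ℝ^d)` with
support compactly contained in `B_{r/4}(x₀)`, for every `δ > 0` there is `η > 0` such that
`sup_{z∈B₁(0)} sup_{0<ε<r/(2(1+τ))} ∬_{E×F}(u^z_ε(x)−u^z_ε(y))² ν(x−y) dy dx < δ`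
whenever `E ⊆ Ω`, `F ⊆ ℝ^d` and `|E×F| < η`. -/
theorem equi_integrability_shifted
    {d : ℕ} (Ω : Set (Ed (d+1))) (hΩo : IsOpen Ω) (hΩb : IsBounded Ω)
    (ν : Ed (d+1) → ℝ) (hν : NuLevy ν)
    (x₀ : Ed (d+1)) (hx₀ : x₀ ∈ frontier Ω)
    (r : ℝ) (hr : 0 < r) (k : NNReal) (hk : 0 < k)
    (γ : Ed d → ℝ) (hγ : LipschitzWith k γ)
    (hgraph : ∀ x : Ed (d+1),
      x ∈ Ω ∩ Metric.ball x₀ r ↔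
        x ∈ Metric.ball x₀ r ∧ γ (WithLp.toLp 2 (fun i : Fin d => x i.castSucc)) < x (Fin.last d))
    (τ : ℝ) (hτ : 1 + (k : ℝ) < τ)
    (u : Ed (d+1) → ℝ) (hu : MemV Ω ν u)
    (husupp : HasCompactSupport u) (husuppB : tsupport u ⊆ Metric.ball x₀ (r / 4)) :
    ∀ δ : ℝ, 0 < δ → ∃ η : ℝ, 0 < η ∧
      ∀ Eset Fset : Set (Ed (d+1)), MeasurableSet Eset → MeasurableSet Fset →
        Eset ⊆ Ω → volume (Eset ×ˢ Fset) < ENNReal.ofReal η →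
        (⨆ z ∈ Metric.ball (0 : Ed (d+1)) 1, ⨆ ε ∈ Set.Ioo 0 (r / (2 * (1 + τ))),
            ∫⁻ p in Eset ×ˢ Fset,
              ENNReal.ofReal
                ((shiftFn u τ ε z p.1 - shiftFn u τ ε z p.2)^2 * ν (p.1 - p.2)))
          < ENNReal.ofReal δ := by

  intro δ hδ
  classical
  obtain ⟨humeas, huV⟩ := hu
  obtain ⟨hνmeas, hνnn, hνrad, hνint, c, hc1, hAD⟩ := hν
  have hk0 : (0:ℝ) ≤ (k:ℝ) := k.2
  have hτ1 : (1:ℝ) < τ := by linarith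
  -- basic objects
  set T : Set (Ed (d+1)) := tsupport u with hTdef
  have hTmeas : MeasurableSet T := (isClosed_tsupport u).measurableSet
  have hTball : T ⊆ Metric.ball x₀ (r/4) := husuppB
  set g : Ed (d+1) × Ed (d+1) → ℝ≥0∞ :=
    fun p => ENNReal.ofReal ((u p.1 - u p.2)^2 * ν (p.1 - p.2)) with hgdef
  have hgmeas : Measurable g := by
    apply ENNReal.measurable_ofReal.comp
    exact (((humeas.comp measurable_fst).sub (humeas.comp measurable_snd)).pow_const 2).mul
      (hνmeas.comp (measurable_fst.sub measurable_snd))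
  have hgsymm : ∀ a b : Ed (d+1), g (a, b) = g (b, a) := by
    intro a b
    simp only [hgdef]
    rw [hνrad (a - b) (b - a) (by rw [norm_sub_rev])]
    ring_nf
  have hvScross : ∫⁻ p in crossSet Ω, g p = vSemi Ω ν u := rfl
  set W₂ : Set (Ed (d+1) × Ed (d+1)) :=
    {p | p.2 ∈ T ∧ (p.1 ∉ T ∧ r/4 ≤ ‖p.1 - p.2‖)} with hW₂def
  have hW₂meas : MeasurableSet W₂ := by
    have h1 : MeasurableSet {p : Ed (d+1) × Ed (d+1) | p.2 ∈ T} := measurable_snd hTmeas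
    have h2 : MeasurableSet {p : Ed (d+1) × Ed (d+1) | p.1 ∉ T} :=
      (measurable_fst hTmeas).compl
    have h3 : MeasurableSet {p : Ed (d+1) × Ed (d+1) | r/4 ≤ ‖p.1 - p.2‖} :=
      measurableSet_le measurable_const (measurable_fst.sub measurable_snd).norm
    exact h1.inter (h2.inter h3)
  have hcross_meas : MeasurableSet (crossSet Ω) :=
    ((hΩo.measurableSet.compl.prod hΩo.measurableSet.compl)).compl
  set Wset : Set (Ed (d+1) × Ed (d+1)) := crossSet Ω ∪ W₂ with hWsetdef
  have hWmeas : MeasurableSet Wset := hcross_meas.union hW₂meas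
  -- finiteness of the dominating integral over W₂
  have hW₂fin : ∫⁻ p in W₂, g p ≠ ⊤ := by
    have hPmeas : MeasurableSet {h : Ed (d+1) | r/4 ≤ ‖h‖ ∧ 0 < ν h} :=
      (measurableSet_le measurable_const measurable_norm).inter
        (measurableSet_lt measurable_const hνmeas)
    set P : Set (Ed (d+1)) := {h | r/4 ≤ ‖h‖ ∧ 0 < ν h} with hPdef
    by_cases hP0 : volume P = 0
    · -- ν vanishes a.e. at distance ≥ r/4 : the integral is zero
      have hNm : MeasurableSet {p : Ed (d+1) × Ed (d+1) | p.1 - p.2 ∈ P} :=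
        (measurable_fst.sub measurable_snd) hPmeas
      have hN : volume {p : Ed (d+1) × Ed (d+1) | p.1 - p.2 ∈ P} = 0 := by
        rw [Measure.volume_eq_prod, Measure.prod_apply hNm]
        have hsec : ∀ a : Ed (d+1), volume ((fun b => a - b) ⁻¹' P) = 0 := by
          intro a
          rw [(Measure.measurePreserving_sub_left volume a).measure_preimage
            hPmeas.nullMeasurableSet]
          exact hP0
        have hcg : ∀ a : Ed (d+1),
            volume (Prod.mk a ⁻¹' {p : Ed (d+1) × Ed (d+1) | p.1 - p.2 ∈ P}) = 0 := by
          intro a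
          have hpre : Prod.mk a ⁻¹' {p : Ed (d+1) × Ed (d+1) | p.1 - p.2 ∈ P}
              = (fun b => a - b) ⁻¹' P := rfl
          rw [hpre]
          exact hsec a
        calc ∫⁻ a, volume (Prod.mk a ⁻¹' {p : Ed (d+1) × Ed (d+1) | p.1 - p.2 ∈ P})
            = ∫⁻ _a : Ed (d+1), 0 := lintegral_congr hcg
          _ = 0 := lintegral_zero
      have hsubN : {p : Ed (d+1) × Ed (d+1) | W₂.indicator g p ≠ 0}
          ⊆ {p : Ed (d+1) × Ed (d+1) | p.1 - p.2 ∈ P} := by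
        intro p hp
        simp only [Set.mem_setOf_eq] at hp ⊢
        by_cases hpW : p ∈ W₂
        · rw [Set.indicator_of_mem hpW] at hp
          have hν : 0 < ν (p.1 - p.2) := by
            by_contra hcon
            push_neg at hcon
            exact hp (ENNReal.ofReal_eq_zero.2
              (mul_nonpos_of_nonneg_of_nonpos (sq_nonneg _) hcon))
          exact ⟨hpW.2.2, hν⟩
        · rw [Set.indicator_of_notMem hpW] at hp
          exact absurd rfl hp
      have hz0 : ∫⁻ p in W₂, g p = 0 := by
        rw [← lintegral_indicator hW₂meas]
        rw [lintegral_eq_zero_iff (hgmeas.indicator hW₂meas)]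
        exact ae_iff.mpr (measure_mono_null hsubN hN)
      rw [hz0]
      exact ENNReal.zero_ne_top
    · -- there is mass at some radius ρ > r/4
      have hgeq : γ (WithLp.toLp 2 (fun i : Fin d => x₀ i.castSucc)) = x₀ (Fin.last d) :=
        gamma_eq Ω x₀ r k γ hΩo hx₀ hr hγ hgraph
      have hsph : volume {h : Ed (d+1) | ‖h‖ = r/4} = 0 := by
        have h1 := Measure.addHaar_sphere (volume : Measure (Ed (d+1))) 0 (r/4)
        have h2 : {h : Ed (d+1) | ‖h‖ = r/4} = Metric.sphere 0 (r/4) := by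
          ext h; simp [dist_zero_right]
        rw [h2]; exact h1
      obtain ⟨h₀, hh₀1, hh₀2⟩ : ∃ h₀ : Ed (d+1), r/4 < ‖h₀‖ ∧ 0 < ν h₀ := by
        by_contra hcon
        push_neg at hcon
        apply hP0
        refine measure_mono_null ?_ hsph
        intro h hh
        have h1 : ‖h‖ ≤ r/4 := by
          by_contra h2
          push_neg at h2
          exact absurd hh.2 (not_lt.2 (hcon h h2))
        exact le_antisymm h1 hh.1
      set ρ : ℝ := ‖h₀‖ with hρdef
      have hρr : r/4 < ρ := hh₀1
      have hc0 : (0:ℝ) < c := lt_of_lt_of_le one_pos hc1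
      set m : ℝ := ν h₀ / c with hmdef
      have hm0 : 0 < m := div_pos hh₀2 hc0
      have hνlow : ∀ x : Ed (d+1), x ≠ 0 → ‖x‖ ≤ ρ → m ≤ ν x := by
        intro x hx hxn
        have h1 := hAD x h₀ hx hxn
        rw [hmdef, div_le_iff₀ hc0]
        nlinarith [hνnn x]
      have hkey : ∀ a b : Ed (d+1), ‖a - b‖ ≤ ρ →
          ENNReal.ofReal ((u a - u b)^2) ≤ (ENNReal.ofReal m)⁻¹ * g (a, b) := by
        intro a b hab
        by_cases hEq : a = b
        · simp [hEq]
        · have hsubne : a - b ≠ 0 := sub_ne_zero.2 hEq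
          have h1 : m ≤ ν (a - b) := hνlow _ hsubne hab
          have h2 : ENNReal.ofReal m * ENNReal.ofReal ((u a - u b)^2) ≤ g (a, b) := by
            simp only [hgdef]
            rw [← ENNReal.ofReal_mul hm0.le]
            apply ENNReal.ofReal_le_ofReal
            rw [mul_comm m]
            exact mul_le_mul_of_nonneg_left h1 (sq_nonneg _)
          calc ENNReal.ofReal ((u a - u b)^2)
              = (ENNReal.ofReal m)⁻¹ * (ENNReal.ofReal m * ENNReal.ofReal ((u a - u b)^2)) := by
                rw [← mul_assoc, ENNReal.inv_mul_cancel
                  (ENNReal.ofReal_pos.2 hm0).ne' ENNReal.ofReal_ne_top, one_mul]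
            _ ≤ (ENNReal.ofReal m)⁻¹ * g (a, b) := mul_le_mul_right h2 _
      set kk : ℝ := (k:ℝ) with hkkdef
      set lam : ℝ := min ((ρ - r/4)/(2+kk)) (r/(8*(5+kk))) with hlamdef
      have hlam0 : 0 < lam :=
        lt_min (div_pos (by linarith) (by linarith)) (div_pos hr (by nlinarith))
      have hlam1 : lam ≤ (ρ - r/4)/(2+kk) := min_le_left _ _
      have hlam2 : lam ≤ r/(8*(5+kk)) := min_le_right _ _
      have hlam1' : (2+kk) * lam ≤ ρ - r/4 := by
        rw [le_div_iff₀ (by linarith : (0:ℝ) < 2+kk)] at hlam1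
        linarith
      have hlam2' : (5+kk) * lam ≤ r/8 := by
        rw [le_div_iff₀ (by nlinarith : (0:ℝ) < 8*(5+kk))] at hlam2
        nlinarith
      have hl40 : lam ≤ r/40 := by nlinarith
      set N : ℕ := Nat.ceil (r/(12*lam)) + 1 with hNdef
      have hNcast : (N:ℝ) = (Nat.ceil (r/(12*lam)) : ℝ) + 1 := by
        rw [hNdef]; push_cast; ring
      have hlamne : lam ≠ 0 := ne_of_gt hlam0
      have hlamr4 : 3*lam*(r/(12*lam)) = r/4 := by
        field_simp
        ring
      have hNlow : r/4 + 3*lam ≤ 3*(N:ℝ)*lam := by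
        have h1 : r/(12*lam) ≤ (Nat.ceil (r/(12*lam)) : ℝ) := Nat.le_ceil _
        nlinarith [mul_le_mul_of_nonneg_left h1 (by positivity : (0:ℝ) ≤ 3*lam)]
      have hNhigh : 3*(N:ℝ)*lam ≤ r/4 + 6*lam := by
        have h1 : (Nat.ceil (r/(12*lam)) : ℝ) < r/(12*lam) + 1 :=
          Nat.ceil_lt_add_one (by positivity)
        nlinarith [mul_le_mul_of_nonneg_left h1.le (by positivity : (0:ℝ) ≤ 3*lam)]
      set e1 : Ed (d+1) := EuclideanSpace.single (Fin.last d) (1:ℝ) with he1def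
      set ctr : ℕ → Ed (d+1) := fun i => x₀ + ((1+kk)*lam + 3*(i:ℝ)*lam) • e1 with hctrdef
      have hballsub : ∀ i : ℕ, (i:ℝ) ≤ (N:ℝ) → Metric.ball (ctr i) lam ⊆ Ω := by
        intro i hi q hq
        have hin : (0:ℝ) ≤ 3*(i:ℝ)*lam := by positivity
        refine cone_in Ω x₀ r k γ hγ hgraph hgeq hlam0 (by nlinarith) ?_ hq
        have him : (i:ℝ)*lam ≤ (N:ℝ)*lam := mul_le_mul_of_nonneg_right hi hlam0.le
        nlinarith
      set V : ℝ≥0∞ := volume (Metric.ball (0 : Ed (d+1)) lam) with hVdef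
      have hVball : ∀ cpt : Ed (d+1), volume (Metric.ball cpt lam) = V :=
        fun cpt => Measure.addHaar_ball_center volume cpt lam
      have hV0 : V ≠ 0 := (measure_ball_pos volume 0 hlam0).ne'
      have hVtop : V ≠ ⊤ := measure_ball_lt_top.ne
      set Minv : ℝ≥0∞ := (ENNReal.ofReal m)⁻¹ with hMinvdef
      have hMinvtop : Minv ≠ ⊤ := by
        rw [hMinvdef]
        exact ENNReal.inv_ne_top.2 (ENNReal.ofReal_pos.2 hm0).ne'
      have hsqmeas : Measurable fun q : Ed (d+1) × Ed (d+1) =>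
          ENNReal.ofReal ((u q.2 - u q.1)^2) :=
        ENNReal.measurable_ofReal.comp
          (((humeas.comp measurable_snd).sub (humeas.comp measurable_fst)).pow_const 2)
      have pairbound : ∀ A B : Set (Ed (d+1)), MeasurableSet A → MeasurableSet B →
          (∀ a ∈ A, ∀ b ∈ B, ‖a - b‖ ≤ ρ) → (B ×ˢ A ⊆ crossSet Ω) →
          ∫⁻ q in B ×ˢ A, ENNReal.ofReal ((u q.2 - u q.1)^2) ≤ Minv * vSemi Ω ν u := by
        intro A B hA hB hdist hsub
        have h1 : ∫⁻ q in B ×ˢ A, ENNReal.ofReal ((u q.2 - u q.1)^2)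
            ≤ ∫⁻ q in B ×ˢ A, Minv * g q := by
          apply lintegral_mono_ae
          rw [ae_restrict_iff' (hB.prod hA)]
          refine Filter.Eventually.of_forall fun q hq => ?_
          have h2 := hkey q.2 q.1 (hdist q.2 hq.2 q.1 hq.1)
          rw [hgsymm q.2 q.1] at h2
          rw [hMinvdef]
          exact h2
        have h2 : ∫⁻ q in B ×ˢ A, Minv * g q = Minv * ∫⁻ q in B ×ˢ A, g q :=
          lintegral_const_mul Minv hgmeas
        have h3 : ∫⁻ q in B ×ˢ A, g q ≤ vSemi Ω ν u := by
          rw [← hvScross]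
          exact lintegral_mono_set hsub
        calc ∫⁻ q in B ×ˢ A, ENNReal.ofReal ((u q.2 - u q.1)^2)
            ≤ Minv * ∫⁻ q in B ×ˢ A, g q := by rw [← h2]; exact h1
          _ ≤ Minv * vSemi Ω ν u := mul_le_mul_right h3 _
      set Jf : ℕ → ℝ≥0∞ :=
        fun i => ∫⁻ a in Metric.ball (ctr i) lam, ENNReal.ofReal (u a ^ 2) with hJfdef
      have hJmeas : Measurable fun a : Ed (d+1) => ENNReal.ofReal (u a ^ 2) :=
        ENNReal.measurable_ofReal.comp (humeas.pow_const 2)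
      have hsq2 : ∀ x y : ℝ, ENNReal.ofReal (x^2)
          ≤ 2 * ENNReal.ofReal ((x - y)^2) + 2 * ENNReal.ofReal (y^2) := by
        intro x y
        calc ENNReal.ofReal (x^2) ≤ ENNReal.ofReal (2*(x-y)^2 + 2*y^2) :=
              ENNReal.ofReal_le_ofReal (by nlinarith [sq_nonneg (x - 2*y)])
          _ = 2 * ENNReal.ofReal ((x-y)^2) + 2 * ENNReal.ofReal (y^2) := by
              rw [ENNReal.ofReal_add (by positivity) (by positivity),
                ENNReal.ofReal_mul (by norm_num : (0:ℝ) ≤ 2),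
                ENNReal.ofReal_mul (by norm_num : (0:ℝ) ≤ 2)]
              norm_num
      have hctrx₀ : ∀ i : ℕ, ‖ctr i - x₀‖ = (1+kk)*lam + 3*(i:ℝ)*lam := by
        intro i
        have h1 : ctr i - x₀ = ((1+kk)*lam + 3*(i:ℝ)*lam) • e1 := by
          rw [hctrdef]
          exact add_sub_cancel_left x₀ _
        rw [h1, norm_smul, Real.norm_eq_abs, he1def, EuclideanSpace.norm_single,
          abs_of_nonneg (by positivity)]
        norm_num
      have hctrdist : ∀ i : ℕ, ‖ctr (i+1) - ctr i‖ = 3*lam := by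
        intro i
        have h1 : ctr (i+1) - ctr i = (3*lam) • e1 := by
          rw [hctrdef]
          simp only [add_sub_add_left_eq_sub, ← sub_smul]
          congr 1
          push_cast
          ring
        rw [h1, norm_smul, Real.norm_eq_abs, he1def, EuclideanSpace.norm_single,
          abs_of_pos (by positivity)]
        norm_num
      have genbound : ∀ (A B : Set (Ed (d+1))), MeasurableSet A → MeasurableSet B →
          volume B ≠ ⊤ →
          (∀ a ∈ A, ∀ b ∈ B, ‖a - b‖ ≤ ρ) → (B ×ˢ A ⊆ crossSet Ω) →
          (∫⁻ a in A, ENNReal.ofReal (u a ^ 2)) ≠ ⊤ →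
          volume A * ∫⁻ b in B, ENNReal.ofReal (u b ^ 2) ≠ ⊤ := by
        intro A B hA hB hBtop hdist hsub hAfin
        have hm1 : volume A * ∫⁻ b in B, ENNReal.ofReal (u b^2)
            = ∫⁻ q in B ×ˢ A, ENNReal.ofReal (u q.1 ^ 2) := by
          rw [prod_fst_integral B A _ hJmeas]
        have hm2 : ∫⁻ q in B ×ˢ A, ENNReal.ofReal (u q.1 ^2)
            ≤ (∫⁻ q in B ×ˢ A, 2 * ENNReal.ofReal ((u q.1 - u q.2)^2))
              + ∫⁻ q in B ×ˢ A, 2 * ENNReal.ofReal (u q.2 ^2) := by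
          calc ∫⁻ q in B ×ˢ A, ENNReal.ofReal (u q.1^2)
              ≤ ∫⁻ q in B ×ˢ A, (2 * ENNReal.ofReal ((u q.1 - u q.2)^2)
                  + 2 * ENNReal.ofReal (u q.2^2)) :=
                lintegral_mono fun q => hsq2 (u q.1) (u q.2)
            _ = _ := lintegral_add_left
                ((ENNReal.measurable_ofReal.comp
                  (((humeas.comp measurable_fst).sub (humeas.comp measurable_snd)).pow_const 2)).const_mul 2) _
        have hm3 : ∫⁻ q in B ×ˢ A, 2 * ENNReal.ofReal ((u q.1 - u q.2)^2)
            ≤ 2 * (Minv * vSemi Ω ν u) := by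
          have hcongr : ∫⁻ q in B ×ˢ A, 2 * ENNReal.ofReal ((u q.1 - u q.2)^2)
              = ∫⁻ q in B ×ˢ A, 2 * ENNReal.ofReal ((u q.2 - u q.1)^2) := by
            refine lintegral_congr fun q => ?_
            rw [show (u q.1 - u q.2)^2 = (u q.2 - u q.1)^2 by ring]
          rw [hcongr, lintegral_const_mul 2 hsqmeas]
          exact mul_le_mul_right (pairbound A B hA hB hdist hsub) 2
        have hm4 : ∫⁻ q in B ×ˢ A, 2 * ENNReal.ofReal (u q.2 ^2)
            = 2 * (volume B * ∫⁻ a in A, ENNReal.ofReal (u a^2)) := by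
          rw [lintegral_const_mul 2 (show Measurable fun q : Ed (d+1) × Ed (d+1) =>
              ENNReal.ofReal (u q.2 ^ 2) from hJmeas.comp measurable_snd),
            prod_snd_integral B A _ hJmeas]
        rw [hm1]
        apply ne_top_of_le_ne_top _ (le_trans hm2 (add_le_add hm3 hm4.le))
        exact ENNReal.add_ne_top.2
          ⟨ENNReal.mul_ne_top (by norm_num) (ENNReal.mul_ne_top hMinvtop huV.ne),
            ENNReal.mul_ne_top (by norm_num) (ENNReal.mul_ne_top hBtop hAfin)⟩
      have hstep : ∀ i : ℕ, ((i:ℝ)+1) ≤ (N:ℝ) → Jf (i+1) ≠ ⊤ → Jf i ≠ ⊤ := by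
        intro i hiN hJi1
        have hdist : ∀ a ∈ Metric.ball (ctr (i+1)) lam, ∀ b ∈ Metric.ball (ctr i) lam,
            ‖a - b‖ ≤ ρ := by
          intro a ha b hb
          rw [Metric.mem_ball] at ha hb
          have h3 : dist (ctr (i+1)) (ctr i) = 3*lam := by
            rw [dist_eq_norm, hctrdist]
          have h4 := dist_triangle4 a (ctr (i+1)) (ctr i) b
          rw [dist_comm b (ctr i)] at hb
          rw [← dist_eq_norm]
          nlinarith [dist_nonneg (x := a) (y := b)]
        have hsub : Metric.ball (ctr i) lam ×ˢ Metric.ball (ctr (i+1)) lam ⊆ crossSet Ω := by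
          intro q hq hmem
          exact hmem.2 (hballsub (i+1) (by push_cast; linarith) hq.2)
        have hres := genbound (Metric.ball (ctr (i+1)) lam) (Metric.ball (ctr i) lam)
          measurableSet_ball measurableSet_ball measure_ball_lt_top.ne hdist hsub hJi1
        rw [hVball (ctr (i+1))] at hres
        have hres' : V * Jf i ≠ ⊤ := hres
        intro hJitop
        rw [hJitop, ENNReal.mul_top hV0] at hres'
        exact hres' rfl
      have hJN : Jf N = 0 := by
        have hzero : ∀ a ∈ Metric.ball (ctr N) lam, ENNReal.ofReal (u a ^ 2) = 0 := by
          intro a ha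
          have hu0 : u a = 0 := by
            apply image_eq_zero_of_notMem_tsupport
            intro haT
            have h1 : dist a x₀ < r/4 := hTball haT
            rw [Metric.mem_ball, dist_comm] at ha
            have h3 := hctrx₀ N
            have h4 : dist (ctr N) x₀ ≤ dist (ctr N) a + dist a x₀ := dist_triangle _ _ _
            rw [dist_eq_norm (ctr N) x₀, h3] at h4
            nlinarith [mul_nonneg hk0 hlam0.le]
          rw [hu0]
          norm_num
        rw [hJfdef]
        calc ∫⁻ a in Metric.ball (ctr N) lam, ENNReal.ofReal (u a ^ 2)
            = ∫⁻ _a in Metric.ball (ctr N) lam, 0 :=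
              setLIntegral_congr_fun measurableSet_ball
                hzero
          _ = 0 := lintegral_zero
      have hchain : ∀ j : ℕ, Jf (N - j) ≠ ⊤ := by
        intro j
        induction j with
        | zero =>
            simp only [Nat.sub_zero, hJN]
            exact ENNReal.zero_ne_top
        | succ j ih =>
            by_cases hj : N ≤ j
            · have h1 : N - (j+1) = N - j := by omega
              rw [h1]; exact ih
            · push_neg at hj
              have h1 : N - (j+1) + 1 = N - j := by omega
              have h2 : N - (j+1) + 1 ≤ N := by omega
              refine hstep (N - (j+1)) ?_ ?_
              · exact_mod_cast Nat.cast_le.2 h2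
              · rw [h1]; exact ih
      have hJ0 : Jf 0 ≠ ⊤ := by
        have h1 := hchain N
        rwa [Nat.sub_self] at h1
      have hTvol : volume T ≠ ⊤ := husupp.measure_lt_top.ne
      have hLT : (∫⁻ b in T, ENNReal.ofReal (u b ^ 2)) ≠ ⊤ := by
        have hdist : ∀ a ∈ Metric.ball (ctr 0) lam, ∀ b ∈ T, ‖a - b‖ ≤ ρ := by
          intro a ha b hb
          rw [Metric.mem_ball] at ha
          have h2 := hctrx₀ 0
          norm_num at h2
          have h3 := hTball hb
          rw [Metric.mem_ball] at h3
          have h4 : dist a b ≤ dist a (ctr 0) + dist (ctr 0) x₀ + dist x₀ b :=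
            dist_triangle4 a (ctr 0) x₀ b
          rw [dist_eq_norm (ctr 0) x₀, h2, dist_comm x₀ b] at h4
          rw [← dist_eq_norm]
          have hexp : (2+kk)*lam = lam + (1+kk)*lam := by ring
          linarith
        have hsub : T ×ˢ Metric.ball (ctr 0) lam ⊆ crossSet Ω := by
          intro q hq hmem
          exact hmem.2 (hballsub 0 (by exact_mod_cast Nat.zero_le N) hq.2)
        have hres := genbound (Metric.ball (ctr 0) lam) T
          measurableSet_ball hTmeas hTvol hdist hsub hJ0
        rw [hVball (ctr 0)] at hres
        intro hLTtop
        rw [hLTtop, ENNReal.mul_top hV0] at hres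
        exact hres rfl
      -- Tonelli bound over W₂
      have hFνmeas : Measurable (Set.indicator {h : Ed (d+1) | r/4 ≤ ‖h‖}
          (fun h => ENNReal.ofReal (ν h))) :=
        (ENNReal.measurable_ofReal.comp hνmeas).indicator
          (measurableSet_le measurable_const measurable_norm)
      set Fν : Ed (d+1) → ℝ≥0∞ := Set.indicator {h : Ed (d+1) | r/4 ≤ ‖h‖}
          (fun h => ENNReal.ofReal (ν h)) with hFνdef
      set Iν : ℝ≥0∞ := ∫⁻ h, Fν h with hIνdef
      have hIνtop : Iν ≠ ⊤ := by
        have hmm : (0:ℝ) < min 1 ((r/4)^2) := lt_min one_pos (by positivity)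
        have h1 : Iν ≤ (ENNReal.ofReal (min 1 ((r/4)^2)))⁻¹
            * ∫⁻ h, ENNReal.ofReal (min 1 (‖h‖^2) * ν h) := by
          rw [hIνdef, ← lintegral_const_mul _
            (show Measurable fun h : Ed (d+1) => ENNReal.ofReal (min 1 (‖h‖^2) * ν h) from
              ENNReal.measurable_ofReal.comp
                ((measurable_const.min (measurable_norm.pow_const 2)).mul hνmeas))]
          apply lintegral_mono fun h => ?_
          by_cases hh : h ∈ {h : Ed (d+1) | r/4 ≤ ‖h‖}
          · rw [hFνdef, Set.indicator_of_mem hh]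
            have hle : (r/4)^2 ≤ ‖h‖^2 := by
              have := hh
              simp only [Set.mem_setOf_eq] at this
              nlinarith [norm_nonneg h, hr]
            have h2 : ENNReal.ofReal (min 1 ((r/4)^2)) * ENNReal.ofReal (ν h)
                ≤ ENNReal.ofReal (min 1 (‖h‖^2) * ν h) := by
              rw [← ENNReal.ofReal_mul hmm.le]
              apply ENNReal.ofReal_le_ofReal
              exact mul_le_mul_of_nonneg_right (min_le_min le_rfl hle) (hνnn h)
            calc ENNReal.ofReal (ν h)
                = (ENNReal.ofReal (min 1 ((r/4)^2)))⁻¹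
                  * (ENNReal.ofReal (min 1 ((r/4)^2)) * ENNReal.ofReal (ν h)) := by
                  rw [← mul_assoc, ENNReal.inv_mul_cancel
                    (ENNReal.ofReal_pos.2 hmm).ne' ENNReal.ofReal_ne_top, one_mul]
              _ ≤ (ENNReal.ofReal (min 1 ((r/4)^2)))⁻¹
                  * ENNReal.ofReal (min 1 (‖h‖^2) * ν h) := mul_le_mul_right h2 _
          · rw [hFνdef, Set.indicator_of_notMem hh]
            exact zero_le
        exact ne_top_of_le_ne_top (ENNReal.mul_ne_top
          (ENNReal.inv_ne_top.2 (ENNReal.ofReal_pos.2 hmm).ne') hνint.ne) h1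
      have hdom : ∀ p : Ed (d+1) × Ed (d+1), W₂.indicator g p
          ≤ (Set.indicator T (fun b => ENNReal.ofReal (u b ^ 2)) p.2) * Fν (p.1 - p.2) := by
        intro p
        by_cases hp : p ∈ W₂
        · rw [Set.indicator_of_mem hp]
          obtain ⟨hp2, hp1, hpn⟩ := hp
          rw [Set.indicator_of_mem hp2, hFνdef,
            Set.indicator_of_mem (by exact hpn : p.1 - p.2 ∈ {h : Ed (d+1) | r/4 ≤ ‖h‖})]
          have h1 : u p.1 = 0 := image_eq_zero_of_notMem_tsupport hp1
          simp only [hgdef]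
          rw [h1, ← ENNReal.ofReal_mul (sq_nonneg _)]
          apply ENNReal.ofReal_le_ofReal
          apply le_of_eq
          ring
        · rw [Set.indicator_of_notMem hp]
          exact zero_le
      have hprodmeas : Measurable fun p : Ed (d+1) × Ed (d+1) =>
          (Set.indicator T (fun b => ENNReal.ofReal (u b ^ 2)) p.2) * Fν (p.1 - p.2) :=
        ((hJmeas.indicator hTmeas).comp measurable_snd).mul
          (hFνmeas.comp (measurable_fst.sub measurable_snd))
      have hWW : ∫⁻ p in W₂, g p ≤ (∫⁻ b in T, ENNReal.ofReal (u b ^ 2)) * Iν := by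
        rw [← lintegral_indicator hW₂meas]
        calc ∫⁻ p, W₂.indicator g p
            ≤ ∫⁻ p : Ed (d+1) × Ed (d+1),
                (Set.indicator T (fun b => ENNReal.ofReal (u b ^ 2)) p.2) * Fν (p.1 - p.2) :=
              lintegral_mono hdom
          _ = ∫⁻ b, ∫⁻ a, (Set.indicator T (fun bb => ENNReal.ofReal (u bb ^ 2)) b)
                * Fν (a - b) := by
              rw [Measure.volume_eq_prod]
              exact lintegral_prod_symm _ hprodmeas.aemeasurable
          _ = ∫⁻ b, (Set.indicator T (fun bb => ENNReal.ofReal (u bb ^ 2)) b) * Iν := by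
              refine lintegral_congr fun b => ?_
              rw [lintegral_const_mul _ (show Measurable fun a : Ed (d+1) => Fν (a - b) from
                hFνmeas.comp (measurable_id.sub measurable_const))]
              congr 1
              have hfe : (fun a : Ed (d+1) => Fν (a - b)) = fun a => Fν (a + (-b)) := by
                funext a
                rw [sub_eq_add_neg]
              rw [hIνdef, hfe]
              exact lintegral_add_right_eq_self Fν (-b)
          _ = (∫⁻ b, Set.indicator T (fun bb => ENNReal.ofReal (u bb ^ 2)) b) * Iν :=
              lintegral_mul_const _ (hJmeas.indicator hTmeas)
          _ = (∫⁻ b in T, ENNReal.ofReal (u b ^ 2)) * Iν := by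
              rw [lintegral_indicator hTmeas]
      exact ne_top_of_le_ne_top (ENNReal.mul_ne_top hLT hIνtop) hWW
  -- finiteness of the full dominating function
  have hGfin : ∫⁻ p, Wset.indicator g p ≠ ⊤ := by
    rw [lintegral_indicator hWmeas]
    have hle : ∫⁻ p in Wset, g p ≤ (∫⁻ p in crossSet Ω, g p) + ∫⁻ p in W₂, g p :=
      lintegral_union_le _ _ _
    rw [hvScross] at hle
    exact ne_top_of_le_ne_top (ENNReal.add_ne_top.2 ⟨huV.ne, hW₂fin⟩) hle
  -- absolute continuity
  obtain ⟨η', hη'0, hη'⟩ := exists_pos_setLIntegral_lt_of_measure_lt hGfin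
    (ε := ENNReal.ofReal (δ/2)) (by simp only [ne_eq, ENNReal.ofReal_eq_zero, not_le]; linarith)
  set η : ℝ := (min η' 1 / 2).toReal with hηdef
  have hmin_ne_top : min η' 1 / 2 ≠ ⊤ := by
    apply ne_top_of_le_ne_top (b := (1:ℝ≥0∞))
    · exact one_ne_top
    · exact le_trans (ENNReal.half_le_self) (min_le_right _ _)
  have hmin_ne_zero : min η' 1 / 2 ≠ 0 := by
    simp only [ne_eq, ENNReal.div_eq_zero_iff]
    push_neg
    refine ⟨?_, by norm_num⟩
    have : 0 < min η' 1 := lt_min hη'0 one_pos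
    exact this.ne'
  have hη0 : 0 < η := ENNReal.toReal_pos hmin_ne_zero hmin_ne_top
  have hηle : ENNReal.ofReal η ≤ η' := by
    rw [hηdef, ENNReal.ofReal_toReal hmin_ne_top]
    exact le_trans (ENNReal.half_le_self) (min_le_left _ _)
  refine ⟨η, hη0, ?_⟩
  intro E F hE hF hEΩ hEF
  have hhalf : ENNReal.ofReal (δ/2) < ENNReal.ofReal δ := by
    apply (ENNReal.ofReal_lt_ofReal_iff hδ).2
    linarith
  refine lt_of_le_of_lt ?_ hhalf
  refine iSup₂_le fun z hz => iSup₂_le fun ε hεI => ?_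
  -- the per-shift bound
  obtain ⟨hε0, hεlt⟩ := hεI
  have hz1 : ‖z‖ < 1 := by simpa [Metric.mem_ball, dist_zero_right] using hz
  set Es : Ed (d+1) := EuclideanSpace.single (Fin.last d) (1:ℝ) with hEsdef
  set v : Ed (d+1) := ε • (τ • Es - z) with hvdef
  have hvn : ‖v‖ < r/2 := by
    have h1 : ‖τ • Es - z‖ ≤ τ + ‖z‖ := by
      calc ‖τ • Es - z‖ ≤ ‖τ • Es‖ + ‖z‖ := norm_sub_le _ _
        _ = τ + ‖z‖ := by
            rw [norm_smul, Real.norm_eq_abs, hEsdef, EuclideanSpace.norm_single,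
              abs_of_pos (by linarith : (0:ℝ) < τ)]
            norm_num
    have h2 : ‖v‖ ≤ ε * (τ + ‖z‖) := by
      rw [hvdef, norm_smul, Real.norm_eq_abs, abs_of_pos hε0]
      exact mul_le_mul_of_nonneg_left h1 hε0.le
    have h3 : ε * (τ + ‖z‖) < ε * (τ + 1) := by
      apply mul_lt_mul_of_pos_left _ hε0
      linarith
    have h4 : ε * (τ + 1) < r/2 := by
      have h5 : ε < r / (2 * (1 + τ)) := hεlt
      have h6 : (0:ℝ) < 1 + τ := by linarith
      calc ε * (τ + 1) < (r / (2 * (1+τ))) * (τ + 1) := by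
            apply mul_lt_mul_of_pos_right h5 (by linarith)
        _ = r / 2 := by field_simp; ring
    linarith
  set w : Ed (d+1) × Ed (d+1) := (v, v) with hwdef
  set S : Set (Ed (d+1) × Ed (d+1)) := E ×ˢ F with hSdef
  -- rewrite the integrand via g
  have hrw : ∀ p : Ed (d+1) × Ed (d+1),
      ENNReal.ofReal ((shiftFn u τ ε z p.1 - shiftFn u τ ε z p.2)^2 * ν (p.1 - p.2))
        = g (p + w) := by
    intro p
    have h1 : (p + w).1 = p.1 + v := rfl
    have h2 : (p + w).2 = p.2 + v := rfl
    simp only [hgdef, h1, h2, shiftFn, hvdef, hEsdef]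
    congr 2
    abel
  -- translation
  have hMPone : MeasurePreserving (fun ξ : Ed (d+1) => ξ + v) volume volume :=
    measurePreserving_add_right volume v
  have hMP : MeasurePreserving (fun p : Ed (d+1) × Ed (d+1) => p + w)
      volume volume := by
    have h1 := hMPone.prod hMPone
    have h2 : (Prod.map (fun ξ : Ed (d+1) => ξ + v) (fun ξ : Ed (d+1) => ξ + v))
        = fun p : Ed (d+1) × Ed (d+1) => p + w := rfl
    rw [h2] at h1
    exact h1
  have hemb : MeasurableEmbedding (fun p : Ed (d+1) × Ed (d+1) => p + w) :=
    (Homeomorph.addRight w).measurableEmbedding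
  set s : Set (Ed (d+1) × Ed (d+1)) := (fun p => p + w) '' S with hsdef
  have hInt : (∫⁻ p in S, g (p + w)) = ∫⁻ q in s, g q :=
    hMP.setLIntegral_comp_emb hemb g S
  have hSmeas : MeasurableSet S := hE.prod hF
  have hsmeas : MeasurableSet s := hemb.measurableSet_image.2 hSmeas
  have hsvol : volume s = volume S := by
    have := hMP.measure_preimage hsmeas.nullMeasurableSet
    rw [Set.preimage_image_eq S hemb.injective] at this
    exact this.symm
  -- coverage
  have hcov : ∀ q ∈ s, g q ≠ 0 → q ∈ Wset := by
    intro q hq hgq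
    obtain ⟨p, hpS, rfl⟩ := hq
    obtain ⟨hp1, hp2⟩ := hpS
    have hx : p.1 ∈ Ω := hEΩ hp1
    have h1 : (p + w).1 = p.1 + v := rfl
    have h2 : (p + w).2 = p.2 + v := rfl
    have hune : u (p.1 + v) ≠ u (p.2 + v) := by
      intro he
      apply hgq
      simp only [hgdef, h1, h2, he, sub_self]
      norm_num
    have htri : ∀ qq : Ed (d+1), ‖qq - x₀‖ ≤ ‖qq + v - x₀‖ + ‖v‖ := by
      intro qq
      have he : qq - x₀ = (qq + v - x₀) + (-v) := by abel
      rw [he]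
      simpa using norm_add_le (qq + v - x₀) (-v)
    have hshift : p.1 + v ∈ Metric.ball x₀ (r/2) → p.1 + v ∈ Ω := by
      intro haball2
      have haball : p.1 + v ∈ Metric.ball x₀ r :=
        Metric.ball_subset_ball (by linarith) haball2
      have hxball : p.1 ∈ Metric.ball x₀ r := by
        rw [Metric.mem_ball, dist_eq_norm] at haball2 ⊢
        have := htri p.1
        linarith
      exact shift_in Ω x₀ r k γ hγ hgraph hτ hz1 hε0 hx hxball haball
    have hcrossmem : ∀ qq : Ed (d+1) × Ed (d+1), qq.1 ∈ Ω → qq ∈ crossSet Ω := by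
      intro qq hqq hmem
      exact hmem.1 hqq
    by_cases haT : p.1 + v ∈ T
    · left
      apply hcrossmem
      rw [h1]
      apply hshift
      have h3 : p.1 + v ∈ Metric.ball x₀ (r/4) := hTball haT
      exact Metric.ball_subset_ball (by linarith) h3
    
    · have hbT : p.2 + v ∈ T := by
        by_contra hbT
        exact hune (by rw [image_eq_zero_of_notMem_tsupport haT,
          image_eq_zero_of_notMem_tsupport hbT])
      by_cases haΩ : p.1 + v ∈ Ω
      · left
        apply hcrossmem
        rw [h1]
        exact haΩ
      · right
        have hfar : r/2 ≤ ‖(p.1 + v) - x₀‖ := by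
          by_contra hcon
          push_neg at hcon
          apply haΩ
          apply hshift
          rw [Metric.mem_ball, dist_eq_norm]
          linarith
        have hbnear : ‖(p.2 + v) - x₀‖ < r/4 := by
          have h3 := hTball hbT
          rwa [Metric.mem_ball, dist_eq_norm] at h3
        have hdist : r/4 ≤ ‖(p.1 + v) - (p.2 + v)‖ := by
          have htri2 : ‖(p.1+v) - x₀‖ ≤ ‖(p.1+v) - (p.2+v)‖ + ‖(p.2+v) - x₀‖ := by
            have he : (p.1+v) - x₀ = ((p.1+v) - (p.2+v)) + ((p.2+v) - x₀) := by abel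
            rw [he]
            exact norm_add_le _ _
          linarith
        exact ⟨hbT, haT, hdist⟩
  -- conclude
  have hfinal : ∫⁻ q in s, g q < ENNReal.ofReal (δ/2) := by
    have hle2 : ∫⁻ q in s, g q ≤ ∫⁻ q in s, Wset.indicator g q := by
      apply lintegral_mono_ae
      rw [ae_restrict_iff' hsmeas]
      refine Filter.Eventually.of_forall (fun q hq => ?_)
      by_cases hgq : g q = 0
      · simp [hgq]
      · rw [Set.indicator_of_mem (hcov q hq hgq)]
    refine lt_of_le_of_lt hle2 ?_
    apply hη'
    rw [hsvol]
    exact lt_of_lt_of_le hEF hηle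
  calc ∫⁻ p in E ×ˢ F,
        ENNReal.ofReal ((shiftFn u τ ε z p.1 - shiftFn u τ ε z p.2)^2 * ν (p.1 - p.2))
      = ∫⁻ p in S, g (p + w) := lintegral_congr fun p => hrw p
    _ = ∫⁻ q in s, g q := hInt
    _ ≤ ENNReal.ofReal (δ/2) := hfinal.le


end NonlocalMosco
end
end
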